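/- arXiv:1501.00577 — 7 statements merged into one kernel-verified Lean document; each statement's English description precedes it below -/
import Mathlib

section
/- The square root velocity map Q : AC₀(I,ℝᴺ) → L²(I,ℝᴺ) defined by Q(f) = V ∘ f′ is a bijection. Its inverse sends q ∈ L²(I,ℝᴺ) to the function f(t) = ∫₀ᵗ q(u)|q(u)| du, i.e. this f lies in AC₀(I,ℝᴺ) and satisfies Q(f) = q (almost everywhere), and it is the unique such element of AC₀(I,ℝᴺ). -/
open MeasureTheory Set Filter
open scoped Classical

noncomputable section

/-- Lebesgue measure restricted to the unit interval `I = [0,1]`. -/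
def μ01 : Measure ℝ := volume.restrict (Set.Icc (0:ℝ) 1)

/-- The map `V : ℝᴺ → ℝᴺ`, `V x = x / √|x|` for `x ≠ 0` and `V 0 = 0`. -/
def Vmap {E : Type*} [NormedAddCommGroup E] [NormedSpace ℝ E] (x : E) : E :=
  if x = 0 then 0 else (Real.sqrt ‖x‖)⁻¹ • x

/-- `f ∈ AC₀(I,ℝᴺ)`: `f 0 = 0`, `f` has an a.e. derivative `g` that is Lebesgue
integrable on `I`, and `f t = f 0 + ∫₀ᵗ g` for all `t ∈ I`. -/
def IsAC0 {E : Type*} [NormedAddCommGroup E] [NormedSpace ℝ E] (f : ℝ → E) : Prop :=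
  f 0 = 0 ∧ ∃ g : ℝ → E, IntegrableOn g (Set.Icc (0:ℝ) 1) volume ∧
    ∀ t ∈ Set.Icc (0:ℝ) 1, f t = ∫ u in (0:ℝ)..t, g u

/-- `Q f = q` in `L²`: for a(ny) a.e. derivative `g` of `f`, `V ∘ g = q` almost
everywhere on `I`. -/
def SRVFIs {E : Type*} [NormedAddCommGroup E] [NormedSpace ℝ E] (f q : ℝ → E) : Prop :=
  ∃ g : ℝ → E, IntegrableOn g (Set.Icc (0:ℝ) 1) volume ∧
    (∀ t ∈ Set.Icc (0:ℝ) 1, f t = ∫ u in (0:ℝ)..t, g u) ∧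
    (fun u => Vmap (g u)) =ᵐ[μ01] q

/-! `V` and `W x = ‖x‖ • x` are mutually inverse bijections of `E`, and `W` maps `L²` into `L¹` by
Hölder. Hence `t ↦ ∫₀ᵗ W ∘ q` is absolutely continuous with square root velocity `V ∘ W ∘ q = q`, and
any `f` with `V ∘ f' = q` a.e. has `f' = W ∘ q` a.e., so it has the same integral. -/

section Vmap

variable {E : Type*} [NormedAddCommGroup E] [NormedSpace ℝ E]

theorem Vmap_norm_smul_self (x : E) : Vmap (‖x‖ • x) = x := by
  rcases eq_or_ne x 0 with rfl | hx
  · simp [Vmap]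
  have hn : ‖x‖ ≠ 0 := norm_ne_zero_iff.mpr hx
  have hnorm : ‖‖x‖ • x‖ = ‖x‖ * ‖x‖ := by rw [norm_smul, norm_norm]
  rw [Vmap, if_neg (smul_ne_zero hn hx), hnorm, Real.sqrt_mul_self (norm_nonneg x), smul_smul,
    inv_mul_cancel₀ hn, one_smul]

theorem norm_Vmap (x : E) : ‖Vmap x‖ = Real.sqrt ‖x‖ := by
  rcases eq_or_ne x 0 with rfl | hx
  · simp [Vmap]
  have hs : 0 < Real.sqrt ‖x‖ := Real.sqrt_pos.mpr (norm_pos_iff.mpr hx)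
  rw [Vmap, if_neg hx, norm_smul, norm_inv, Real.norm_of_nonneg hs.le,
    inv_mul_eq_iff_eq_mul₀ hs.ne', Real.mul_self_sqrt (norm_nonneg x)]

theorem norm_smul_Vmap (x : E) : ‖Vmap x‖ • Vmap x = x := by
  rcases eq_or_ne x 0 with rfl | hx
  · simp [Vmap]
  have hs : Real.sqrt ‖x‖ ≠ 0 := (Real.sqrt_pos.mpr (norm_pos_iff.mpr hx)).ne'
  rw [norm_Vmap, Vmap, if_neg hx, smul_smul, mul_inv_cancel₀ hs, one_smul]

end Vmap

theorem MeasureTheory.MemLp.integrable_norm_smul_self {α E : Type*} [MeasurableSpace α]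
    {μ : Measure α} [NormedAddCommGroup E] [NormedSpace ℝ E] {q : α → E} (hq : MemLp q 2 μ) :
    Integrable (fun u => ‖q u‖ • q u) μ :=
  memLp_one_iff_integrable.mp (hq.smul hq.norm)

theorem intervalIntegral_congr_ae_Icc {E : Type*} [NormedAddCommGroup E] [NormedSpace ℝ E]
    {f g : ℝ → E} {a b t : ℝ} (hfg : f =ᵐ[volume.restrict (Icc a b)] g) (ht : t ∈ Icc a b) :
    ∫ u in a..t, f u = ∫ u in a..t, g u := by
  refine intervalIntegral.integral_congr_ae ?_
  rw [uIoc_of_le ht.1]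
  exact (ae_restrict_iff' measurableSet_Icc).mp hfg |>.mono
    fun u hu hut => hu ⟨hut.1.le, hut.2.trans ht.2⟩

theorem srvf_bijection_general (N : ℕ)
    (q : ℝ → EuclideanSpace ℝ (Fin N)) (hq : MemLp q 2 μ01) :
    IsAC0 (fun t => ∫ u in (0:ℝ)..t, ‖q u‖ • q u) ∧
    SRVFIs (fun t => ∫ u in (0:ℝ)..t, ‖q u‖ • q u) q ∧
    ∀ f : ℝ → EuclideanSpace ℝ (Fin N), IsAC0 f → SRVFIs f q →
      ∀ t ∈ Set.Icc (0:ℝ) 1, f t = ∫ u in (0:ℝ)..t, ‖q u‖ • q u := by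
  have hint : IntegrableOn (fun u => ‖q u‖ • q u) (Icc 0 1) volume :=
    hq.integrable_norm_smul_self
  refine ⟨⟨by simp, _, hint, fun _ _ => rfl⟩,
    ⟨_, hint, fun _ _ => rfl, .of_forall fun u => Vmap_norm_smul_self (q u)⟩, ?_⟩
  rintro f - ⟨g, -, hfg, hVg⟩ t ht
  have hg : g =ᵐ[μ01] fun u => ‖q u‖ • q u := by
    filter_upwards [hVg] with u hu
    rw [← hu, norm_smul_Vmap]
  rw [hfg t ht]
  exact intervalIntegral_congr_ae_Icc hg ht

/-- the square root velocity map `Q : AC₀(I,ℝᴺ) → L²(I,ℝᴺ)` is a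
bijection, with inverse `q ↦ (t ↦ ∫₀ᵗ q(u)|q(u)| du)`: for every `q ∈ L²(I,ℝᴺ)`,
the function `f₀ t = ∫₀ᵗ ‖q u‖ • q u du` lies in `AC₀(I,ℝᴺ)`, satisfies
`Q f₀ = q` a.e., and is the unique element of `AC₀(I,ℝᴺ)` with this property. -/
theorem srvf_bijection (N : ℕ) (hN : 1 ≤ N)
    (q : ℝ → EuclideanSpace ℝ (Fin N)) (hq : MemLp q 2 μ01) :
    IsAC0 (fun t => ∫ u in (0:ℝ)..t, ‖q u‖ • q u) ∧
    SRVFIs (fun t => ∫ u in (0:ℝ)..t, ‖q u‖ • q u) q ∧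
    ∀ f : ℝ → EuclideanSpace ℝ (Fin N), IsAC0 f → SRVFIs f q →
      ∀ t ∈ Set.Icc (0:ℝ) 1, f t = ∫ u in (0:ℝ)..t, ‖q u‖ • q u :=
  srvf_bijection_general N q hq

end
end

section
/- For every γ ∈ Γ̃ and all q₁, q₂ ∈ L²(I,ℝᴺ), one has ⟨q₁*γ, q₂*γ⟩ = ⟨q₁, q₂⟩; in particular the right action of the semigroup Γ̃ (and hence of the group Γ) on L²(I,ℝᴺ) preserves the L² inner product and the L² distance. -/
/-!
The measure `ν = γ' dt` on `I` is a probability measure without atoms, and on `I` its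
distribution function is `γ` itself. A continuous distribution function pushes its measure
forward to Lebesgue measure on `I` (the probability integral transform), so
`∫ γ' · (g ∘ γ) = ∫ g` for every measurable `g`. With `g = ⟨q₁, q₂⟩` this is the invariance of
the inner product, because `⟨q₁*γ, q₂*γ⟩ = γ' · ⟨q₁, q₂⟩ ∘ γ` pointwise; the distance follows
from `q₁*γ - q₂*γ = (q₁ - q₂)*γ`.
-/

open MeasureTheory Set Filter

noncomputable section

/-- An element of the reparametrization semigroup `Γ̃`: an absolutely continuous
`γ : I → I` with `γ 0 = 0`, `γ 1 = 1`, and `γ' ≥ 0` a.e.; absolute continuity is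
encoded by the data of an integrable a.e. derivative `deriv'` with
`γ t = ∫₀ᵗ deriv'`. -/
structure GammaTilde where
  toFun : ℝ → ℝ
  deriv' : ℝ → ℝ
  integrableOn : IntegrableOn deriv' (Set.Icc (0:ℝ) 1) volume
  nonneg : ∀ᵐ t ∂μ01, 0 ≤ deriv' t
  map_zero : toFun 0 = 0
  map_one : toFun 1 = 1
  eq_integral : ∀ t ∈ Set.Icc (0:ℝ) 1, toFun t = ∫ u in (0:ℝ)..t, deriv' u

/-- `γ ∈ Γ` iff moreover `γ' > 0` almost everywhere. -/
def GammaTilde.IsInGamma (γ : GammaTilde) : Prop := ∀ᵐ t ∂μ01, 0 < γ.deriv' t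

variable {E : Type*} [NormedAddCommGroup E] [InnerProductSpace ℝ E]

/-- The right action `(q*γ)(t) = √(γ'(t)) • q(γ(t))`. -/
def act (q : ℝ → E) (γ : GammaTilde) : ℝ → E :=
  fun t => Real.sqrt (γ.deriv' t) • q (γ.toFun t)

/-- The `L²(I)` inner product `⟨f,g⟩ = ∫₀¹ f·g`. -/
def L2inner (f g : ℝ → E) : ℝ := ∫ t in Set.Icc (0:ℝ) 1, (inner ℝ (f t) (g t) : ℝ)

/-- The `L²(I)` distance. -/
def L2dist (f g : ℝ → E) : ℝ := Real.sqrt (∫ t in Set.Icc (0:ℝ) 1, ‖f t - g t‖^2)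

/-- The orbit `qΓ` of `q` under `Γ` (up to a.e. equality, as befits `L²`). -/
def orbit (q : ℝ → E) : Set (ℝ → E) :=
  {p | ∃ γ : GammaTilde, γ.IsInGamma ∧ p =ᵐ[μ01] act q γ}

/-- The orbit `qΓ̃` of `q` under the semigroup `Γ̃` (up to a.e. equality). -/
def orbitTilde (q : ℝ → E) : Set (ℝ → E) :=
  {p | ∃ γ : GammaTilde, p =ᵐ[μ01] act q γ}

/-- The closure `[q]` of `qΓ` in `L²(I)`. -/
def orbitClosure (q : ℝ → E) : Set (ℝ → E) :=
  {p | MemLp p 2 μ01 ∧ ∀ ε > 0, ∃ r ∈ orbit q, L2dist r p < ε}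

theorem Set.Iic_inter_Icc {α : Type*} [LinearOrder α] (a b c : α) :
    Iic c ∩ Icc a b = Icc a (min b c) := by
  ext t
  simp only [mem_inter_iff, mem_Iic, mem_Icc, le_min_iff]
  tauto

theorem StieltjesFunction.continuous_of_nullSingletonClass (f : StieltjesFunction ℝ)
    [NullSingletonClass f.measure] : Continuous f := by
  refine continuous_iff_continuousAt.2 fun a => ?_
  rw [f.mono.continuousAt_iff_leftLim_eq_rightLim, f.rightLim_eq]
  have h := f.measure_singleton a
  rw [MeasureTheory.measure_singleton, eq_comm, ENNReal.ofReal_eq_zero] at h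
  linarith [f.mono.leftLim_le (le_refl a)]

theorem Monotone.exists_preimage_Iic_eq_Iic {F : ℝ → ℝ} (hmono : Monotone F)
    (hcont : Continuous F) {x : ℝ} (hne : (F ⁻¹' Iic x).Nonempty)
    (hbdd : BddAbove (F ⁻¹' Iic x)) : ∃ c, F c = x ∧ F ⁻¹' Iic x = Iic c := by
  set c := sSup (F ⁻¹' Iic x)
  have hc : F c ≤ x := (isClosed_Iic.preimage hcont).csSup_mem hne hbdd
  refine ⟨c, le_antisymm hc (not_lt.1 fun hlt => ?_),
    subset_antisymm (fun t ht => le_csSup hbdd ht) (fun t ht => (hmono ht).trans hc)⟩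
  obtain ⟨t, hct, ht⟩ := ((hcont.tendsto c).eventually (gt_mem_nhds hlt)).exists_gt
  exact (le_csSup hbdd ht.le).not_gt hct

namespace ProbabilityTheory

variable (ν : Measure ℝ) [IsProbabilityMeasure ν]

theorem continuous_cdf [NullSingletonClass ν] : Continuous (cdf ν) := by
  have : NullSingletonClass (cdf ν).measure := by rw [measure_cdf]; infer_instance
  exact (cdf ν).continuous_of_nullSingletonClass

theorem measure_cdf_preimage_Iic (hcont : Continuous (cdf ν)) (x : ℝ) :
    ν (cdf ν ⁻¹' Iic x) = ENNReal.ofReal (min x 1) := by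
  rcases le_or_gt 1 x with hx1 | hx1
  · have : cdf ν ⁻¹' Iic x = univ := eq_univ_of_forall fun t => (cdf_le_one ν t).trans hx1
    rw [this, measure_univ, min_eq_right hx1, ENNReal.ofReal_one]
  rw [min_eq_left hx1.le]
  rcases (cdf ν ⁻¹' Iic x).eq_empty_or_nonempty with hempty | hne
  · have hx0 : x ≤ 0 := ge_of_tendsto' (tendsto_cdf_atBot ν) fun t =>
      (not_le.1 fun h => hempty.subset h).le
    rw [hempty, measure_empty, ENNReal.ofReal_of_nonpos hx0]
  have hbdd : BddAbove (cdf ν ⁻¹' Iic x) := by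
    obtain ⟨b, hb⟩ :=
      ((tendsto_cdf_atTop ν).eventually (lt_mem_nhds hx1)).exists_forall_of_atTop
    exact ⟨b, fun t ht => not_lt.1 fun hbt => (hb t hbt.le).not_ge ht⟩
  obtain ⟨c, hc, hpre⟩ := (monotone_cdf ν).exists_preimage_Iic_eq_Iic hcont hne hbdd
  rw [hpre, ← ofReal_cdf, hc]

theorem map_cdf_eq_volume_restrict_Icc (hcont : Continuous (cdf ν)) :
    ν.map (cdf ν) = volume.restrict (Icc 0 1) := by
  refine Measure.ext_of_Iic _ _ fun x => ?_
  rw [Measure.map_apply hcont.measurable measurableSet_Iic, measure_cdf_preimage_Iic ν hcont,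
    Measure.restrict_apply measurableSet_Iic, Iic_inter_Icc, Real.volume_Icc, sub_zero, min_comm]

end ProbabilityTheory

namespace GammaTilde

open ProbabilityTheory

variable (γ : GammaTilde)

def derivMeasure : Measure ℝ :=
  μ01.withDensity fun t => ENNReal.ofReal (γ.deriv' t)

theorem derivMeasure_apply {s : Set ℝ} (hs : MeasurableSet s) :
    γ.derivMeasure s = ENNReal.ofReal (∫ t in s ∩ Icc 0 1, γ.deriv' t) := by
  rw [derivMeasure, withDensity_apply _ hs, μ01, Measure.restrict_restrict hs,
    ofReal_integral_eq_lintegral_ofReal (γ.integrableOn.mono_set inter_subset_right)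
      (ae_restrict_of_ae_restrict_of_subset inter_subset_right γ.nonneg)]

theorem integral_Icc_deriv {c : ℝ} (hc : c ∈ Icc (0:ℝ) 1) :
    ∫ t in Icc 0 c, γ.deriv' t = γ.toFun c := by
  rw [γ.eq_integral c hc, intervalIntegral.integral_of_le hc.1, integral_Icc_eq_integral_Ioc]

theorem toFun_nonneg {c : ℝ} (hc : c ∈ Icc (0:ℝ) 1) : 0 ≤ γ.toFun c := by
  rw [← γ.integral_Icc_deriv hc]
  exact setIntegral_nonneg_of_ae_restrict
    (ae_restrict_of_ae_restrict_of_subset (Icc_subset_Icc_right hc.2) γ.nonneg)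

theorem derivMeasure_Iic {c : ℝ} (hc : c ∈ Icc (0:ℝ) 1) :
    γ.derivMeasure (Iic c) = ENNReal.ofReal (γ.toFun c) := by
  rw [derivMeasure_apply _ measurableSet_Iic, Iic_inter_Icc, min_eq_right hc.2,
    γ.integral_Icc_deriv hc]

instance : NullSingletonClass γ.derivMeasure := by
  rw [derivMeasure, μ01]
  infer_instance

instance : IsProbabilityMeasure γ.derivMeasure :=
  ⟨by rw [derivMeasure_apply _ MeasurableSet.univ, univ_inter,
    γ.integral_Icc_deriv ⟨zero_le_one, le_rfl⟩, γ.map_one, ENNReal.ofReal_one]⟩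

theorem cdf_derivMeasure {c : ℝ} (hc : c ∈ Icc (0:ℝ) 1) :
    cdf γ.derivMeasure c = γ.toFun c := by
  rw [cdf_eq_real, measureReal_def, γ.derivMeasure_Iic hc,
    ENNReal.toReal_ofReal (γ.toFun_nonneg hc)]

theorem cdf_derivMeasure_ae_eq : cdf γ.derivMeasure =ᵐ[γ.derivMeasure] γ.toFun :=
  (withDensity_absolutelyContinuous _ _).ae_le <| by
    filter_upwards [ae_restrict_mem measurableSet_Icc] with t ht using γ.cdf_derivMeasure ht

theorem integral_deriv_mul_comp {g : ℝ → ℝ} (hg : AEStronglyMeasurable g μ01) :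
    ∫ t, γ.deriv' t * g (γ.toFun t) ∂μ01 = ∫ s, g s ∂μ01 := by
  have hcont : Continuous (cdf γ.derivMeasure) := continuous_cdf _
  have hmap : γ.derivMeasure.map (cdf γ.derivMeasure) = μ01 :=
    map_cdf_eq_volume_restrict_Icc _ hcont
  calc ∫ t, γ.deriv' t * g (γ.toFun t) ∂μ01
      = ∫ t, g (γ.toFun t) ∂γ.derivMeasure := by
        rw [derivMeasure, integral_withDensity_eq_integral_toReal_smul₀ (μ := μ01)
          γ.integrableOn.aemeasurable.ennreal_ofReal (ae_of_all _ fun _ => ENNReal.ofReal_lt_top)]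
        refine integral_congr_ae ?_
        filter_upwards [γ.nonneg] with t ht
        rw [ENNReal.toReal_ofReal ht, smul_eq_mul]
    _ = ∫ t, g (cdf γ.derivMeasure t) ∂γ.derivMeasure :=
        integral_congr_ae (γ.cdf_derivMeasure_ae_eq.fun_comp g).symm
    _ = ∫ s, g s ∂μ01 := by
        rw [← integral_map hcont.aemeasurable (hmap ▸ hg), hmap]

end GammaTilde

theorem act_sub (p q : ℝ → E) (γ : GammaTilde) : act p γ - act q γ = act (p - q) γ :=
  funext fun _ => (smul_sub _ _ _).symm

theorem inner_act_apply (p q : ℝ → E) {γ : GammaTilde} {t : ℝ} (ht : 0 ≤ γ.deriv' t) :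
    inner ℝ (act p γ t) (act q γ t) =
      γ.deriv' t * inner ℝ (p (γ.toFun t)) (q (γ.toFun t)) := by
  simp only [act, real_inner_smul_left, real_inner_smul_right, ← mul_assoc, Real.mul_self_sqrt ht]

theorem L2inner_act {p q : ℝ → E} (hp : AEStronglyMeasurable p μ01)
    (hq : AEStronglyMeasurable q μ01) (γ : GammaTilde) :
    L2inner (act p γ) (act q γ) = L2inner p q :=
  calc L2inner (act p γ) (act q γ)
      = ∫ t, γ.deriv' t * inner ℝ (p (γ.toFun t)) (q (γ.toFun t)) ∂μ01 :=
        integral_congr_ae <| by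
          filter_upwards [γ.nonneg] with t ht using inner_act_apply p q ht
    _ = L2inner p q := γ.integral_deriv_mul_comp (hp.inner hq)

theorem L2dist_eq_sqrt_L2inner (f g : ℝ → E) : L2dist f g = √(L2inner (f - g) (f - g)) := by
  simp only [L2dist, L2inner, Pi.sub_apply, real_inner_self_eq_norm_sq]

theorem action_isometric_general (N : ℕ) (γ : GammaTilde)
    (q₁ q₂ : ℝ → EuclideanSpace ℝ (Fin N))
    (h₁ : MemLp q₁ 2 μ01) (h₂ : MemLp q₂ 2 μ01) :
    L2inner (act q₁ γ) (act q₂ γ) = L2inner q₁ q₂ ∧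
    L2dist (act q₁ γ) (act q₂ γ) = L2dist q₁ q₂ := by
  have hm₁ := h₁.aestronglyMeasurable
  have hm₂ := h₂.aestronglyMeasurable
  refine ⟨L2inner_act hm₁ hm₂ γ, ?_⟩
  rw [L2dist_eq_sqrt_L2inner, L2dist_eq_sqrt_L2inner, act_sub,
    L2inner_act (hm₁.sub hm₂) (hm₁.sub hm₂) γ]

/-- `Γ̃` (and hence `Γ`) acts on `L²(I,ℝᴺ)` by isometries:
for every `γ ∈ Γ̃` and all `q₁, q₂ ∈ L²(I,ℝᴺ)`, `⟨q₁*γ, q₂*γ⟩ = ⟨q₁, q₂⟩`, and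
the `L²` distance is likewise preserved. -/
theorem action_isometric (N : ℕ) (hN : 1 ≤ N) (γ : GammaTilde)
    (q₁ q₂ : ℝ → EuclideanSpace ℝ (Fin N))
    (h₁ : MemLp q₁ 2 μ01) (h₂ : MemLp q₂ 2 μ01) :
    L2inner (act q₁ γ) (act q₂ γ) = L2inner q₁ q₂ ∧
    L2dist (act q₁ γ) (act q₂ γ) = L2dist q₁ q₂ :=
  action_isometric_general N γ q₁ q₂ h₁ h₂
end
end

section
/- Let q₀ ∈ L²(I,ℝ) be the constant function 1. Then the closure [q₀] of the orbit q₀Γ in L²(I,ℝ) equals {g ∈ L²(I,ℝ) : ∫₀¹ g(t)² dt = 1 and g(t) ≥ 0 for almost every t ∈ I}, and this set equals {√(γ′) : γ ∈ Γ̃}. -/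
open MeasureTheory Set Filter

noncomputable section

variable {E : Type*} [NormedAddCommGroup E] [InnerProductSpace ℝ E]

/-!
Since `q₀ * γ = √γ'`, every element of the orbit is a nonnegative unit vector of `L²(I)`, and
both conditions (norm one, nonnegativity) are closed in `L²`. Conversely a nonnegative unit
vector `g` is `√γ'` for `γ(t) = ∫₀ᵗ g²`, which lies in `Γ̃`; mixing its derivative with that of
the identity, `(1 - δ) γ' + δ > 0`, gives elements of `Γ` converging to `γ`, because the Hellinger
distance is controlled by the total variation: `‖√a - √b‖² ≤ ∫ |a - b|`.
-/

instance : IsProbabilityMeasure μ01 := ⟨by simp [μ01]⟩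

lemma Real.sq_sqrt_sub_sqrt_le_abs_sub {a b : ℝ} (ha : 0 ≤ a) (hb : 0 ≤ b) :
    (√a - √b) ^ 2 ≤ |a - b| := by
  wlog h : b ≤ a generalizing a b
  · rw [abs_sub_comm, ← neg_sub, neg_sq]
    exact this hb ha (le_of_not_ge h)
  rw [abs_of_nonneg (sub_nonneg.2 h)]
  nlinarith [Real.sq_sqrt ha, Real.sq_sqrt hb, Real.sqrt_le_sqrt h, Real.sqrt_nonneg b]

section L2

variable {α : Type*} [MeasurableSpace α] {μ : Measure α}

lemma MeasureTheory.MemLp.sq_norm_toLp {f : α → E} (hf : MemLp f 2 μ) :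
    ‖hf.toLp f‖ ^ 2 = ∫ a, ‖f a‖ ^ 2 ∂μ := by
  rw [← real_inner_self_eq_norm_sq, L2.inner_def]
  exact integral_congr_ae (hf.coeFn_toLp.mono fun a ha => by
    simp only [ha, real_inner_self_eq_norm_sq])

lemma MeasureTheory.MemLp.toLp_nonneg_iff {f : α → ℝ} (hf : MemLp f 2 μ) :
    0 ≤ hf.toLp f ↔ ∀ᵐ a ∂μ, 0 ≤ f a := by
  rw [← Lp.coeFn_nonneg]
  exact eventually_congr (hf.coeFn_toLp.mono fun a ha => by rw [Pi.zero_apply, ha])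

lemma MeasureTheory.MemLp.norm_toLp_eq_one_and_nonneg_iff {f : α → ℝ} (hf : MemLp f 2 μ) :
    (‖hf.toLp f‖ = 1 ∧ 0 ≤ hf.toLp f) ↔ (∫ a, f a ^ 2 ∂μ = 1 ∧ ∀ᵐ a ∂μ, 0 ≤ f a) := by
  simp only [← pow_eq_one_iff_of_nonneg (norm_nonneg _) two_ne_zero, hf.sq_norm_toLp,
    Real.norm_eq_abs, sq_abs, hf.toLp_nonneg_iff]

end L2

lemma L2dist_eq_dist {f h : ℝ → E} (hf : MemLp f 2 μ01) (hh : MemLp h 2 μ01) :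
    L2dist f h = dist (hf.toLp f) (hh.toLp h) := by
  rw [dist_eq_norm, ← MemLp.toLp_sub, L2dist, ← Real.sqrt_sq (norm_nonneg _),
    MemLp.sq_norm_toLp]
  rfl

lemma L2dist_congr_right {F : Type*} [NormedAddCommGroup F] {f g h : ℝ → F}
    (hgh : g =ᵐ[μ01] h) : L2dist f g = L2dist f h := by
  unfold L2dist
  congr 1
  exact integral_congr_ae (hgh.mono fun t ht => by simp only [ht])

lemma L2dist_sqrt_sq_le {a b : ℝ → ℝ} (ha : ∀ᵐ t ∂μ01, 0 ≤ a t) (hb : ∀ᵐ t ∂μ01, 0 ≤ b t)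
    (ha' : Integrable a μ01) (hb' : Integrable b μ01) :
    L2dist (fun t => √(a t)) (fun t => √(b t)) ^ 2 ≤ ∫ t, |a t - b t| ∂μ01 := by
  rw [L2dist, Real.sq_sqrt (integral_nonneg fun t => by positivity)]
  refine integral_mono_of_nonneg (ae_of_all _ fun t => by positivity) (ha'.sub hb').abs ?_
  filter_upwards [ha, hb] with t hat hbt
  simpa only [Real.norm_eq_abs, sq_abs] using Real.sq_sqrt_sub_sqrt_le_abs_sub hat hbt

lemma mem_orbitClosure_of_ae_eq {q g h : ℝ → E} (hgh : g =ᵐ[μ01] h) (hg : g ∈ orbitClosure q) :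
    h ∈ orbitClosure q :=
  ⟨hg.1.ae_eq hgh, fun ε hε => by simpa only [L2dist_congr_right hgh] using hg.2 ε hε⟩

lemma toLp_mem_of_mem_orbitClosure {q g : ℝ → E} {S : Set (Lp E 2 μ01)} (hS : IsClosed S)
    (horbit : ∀ r ∈ orbit q, ∃ hr : MemLp r 2 μ01, hr.toLp r ∈ S) (hg : g ∈ orbitClosure q) :
    hg.1.toLp g ∈ S := by
  refine hS.closure_subset (Metric.mem_closure_iff.2 fun ε hε => ?_)
  obtain ⟨r, hr, hrg⟩ := hg.2 ε hε
  obtain ⟨hrL, hrS⟩ := horbit r hr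
  exact ⟨_, hrS, by rwa [dist_comm, ← L2dist_eq_dist]⟩

lemma act_const_one {q : ℝ → ℝ} (hq : ∀ t, q t = 1) (γ : GammaTilde) :
    act q γ = fun t => √(γ.deriv' t) := by
  funext t
  simp [act, hq]

namespace GammaTilde

lemma integrable_deriv' (γ : GammaTilde) : Integrable γ.deriv' μ01 := γ.integrableOn

lemma integral_deriv' (γ : GammaTilde) : ∫ t, γ.deriv' t ∂μ01 = 1 := by
  have h := γ.eq_integral 1 (by norm_num)
  rwa [γ.map_one, intervalIntegral.integral_of_le zero_le_one,
    ← integral_Icc_eq_integral_Ioc, eq_comm] at h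

lemma memLp_sqrt_deriv' (γ : GammaTilde) : MemLp (fun t => √(γ.deriv' t)) 2 μ01 := by
  refine (memLp_two_iff_integrable_sq
    (Real.continuous_sqrt.comp_aestronglyMeasurable γ.integrable_deriv'.1)).2 ?_
  exact γ.integrable_deriv'.congr (γ.nonneg.mono fun t ht => (Real.sq_sqrt ht).symm)

lemma integral_sq_sqrt_deriv' (γ : GammaTilde) : ∫ t, √(γ.deriv' t) ^ 2 ∂μ01 = 1 := by
  rw [← γ.integral_deriv']
  exact integral_congr_ae (γ.nonneg.mono fun t ht => Real.sq_sqrt ht)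

def ofDensity (ρ : ℝ → ℝ) (hρ : Integrable ρ μ01) (hρ₀ : ∀ᵐ t ∂μ01, 0 ≤ ρ t)
    (hρ₁ : ∫ t, ρ t ∂μ01 = 1) : GammaTilde where
  toFun t := ∫ u in (0:ℝ)..t, ρ u
  deriv' := ρ
  integrableOn := hρ
  nonneg := hρ₀
  map_zero := intervalIntegral.integral_same
  map_one := by rwa [intervalIntegral.integral_of_le zero_le_one, ← integral_Icc_eq_integral_Ioc]
  eq_integral _ _ := rfl

def mixId (γ : GammaTilde) (δ : ℝ) (hδ : δ ∈ Icc (0:ℝ) 1) : GammaTilde :=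
  ofDensity (fun t => (1 - δ) * γ.deriv' t + δ)
    ((γ.integrable_deriv'.const_mul _).add (integrable_const _))
    (γ.nonneg.mono fun t ht => by nlinarith [hδ.1, hδ.2])
    (by
      rw [integral_add (γ.integrable_deriv'.const_mul _) (integrable_const _), integral_const_mul,
        γ.integral_deriv']
      simp)

lemma isInGamma_mixId (γ : GammaTilde) {δ : ℝ} (hδ : δ ∈ Icc (0:ℝ) 1) (hδ₀ : 0 < δ) :
    (γ.mixId δ hδ).IsInGamma :=
  γ.nonneg.mono fun t ht => by
    show 0 < (1 - δ) * γ.deriv' t + δ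
    nlinarith [hδ.2]

lemma L2dist_sqrt_mixId_sq_le (γ : GammaTilde) {δ : ℝ} (hδ : δ ∈ Icc (0:ℝ) 1) :
    L2dist (fun t => √((γ.mixId δ hδ).deriv' t)) (fun t => √(γ.deriv' t)) ^ 2 ≤ 2 * δ := by
  calc _ ≤ ∫ t, |(1 - δ) * γ.deriv' t + δ - γ.deriv' t| ∂μ01 :=
        L2dist_sqrt_sq_le (γ.mixId δ hδ).nonneg γ.nonneg (γ.mixId δ hδ).integrable_deriv'
          γ.integrable_deriv'
    _ ≤ ∫ t, δ * (1 + γ.deriv' t) ∂μ01 := by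
        refine integral_mono_of_nonneg (ae_of_all _ fun t => abs_nonneg _)
          (((integrable_const 1).add γ.integrable_deriv').const_mul δ) ?_
        filter_upwards [γ.nonneg] with t ht
        rw [show (1 - δ) * γ.deriv' t + δ - γ.deriv' t = δ * (1 - γ.deriv' t) by ring,
          abs_mul, abs_of_nonneg hδ.1]
        exact mul_le_mul_of_nonneg_left (abs_le.2 ⟨by linarith, by linarith⟩) hδ.1
    _ = 2 * δ := by
        rw [integral_const_mul, integral_add (integrable_const 1) γ.integrable_deriv',
          integral_deriv']
        simp only [integral_const, probReal_univ, smul_eq_mul, mul_one]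
        ring

end GammaTilde

lemma integral_sq_eq_one_and_nonneg_of_mem_orbitClosure {q g : ℝ → ℝ} (hq : ∀ t, q t = 1)
    (hg : g ∈ orbitClosure q) : ∫ t, g t ^ 2 ∂μ01 = 1 ∧ ∀ᵐ t ∂μ01, 0 ≤ g t := by
  refine hg.1.norm_toLp_eq_one_and_nonneg_iff.1 <|
    toLp_mem_of_mem_orbitClosure (S := {f | ‖f‖ = 1 ∧ 0 ≤ f})
      ((isClosed_eq continuous_norm continuous_const).inter isClosed_nonneg) ?_ hg
  rintro r ⟨γ, -, hr⟩
  rw [act_const_one hq] at hr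
  refine ⟨γ.memLp_sqrt_deriv'.ae_eq hr.symm, (MemLp.norm_toLp_eq_one_and_nonneg_iff _).2 ⟨?_, ?_⟩⟩
  · rw [integral_congr_ae (hr.mono fun t ht => by rw [ht]), γ.integral_sq_sqrt_deriv']
  · exact hr.mono fun t ht => ht ▸ Real.sqrt_nonneg _

lemma exists_gammaTilde_of_integral_sq_eq_one {g : ℝ → ℝ} (h₁ : ∫ t, g t ^ 2 ∂μ01 = 1)
    (h₀ : ∀ᵐ t ∂μ01, 0 ≤ g t) : ∃ γ : GammaTilde, g =ᵐ[μ01] fun t => √(γ.deriv' t) :=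
  ⟨.ofDensity (fun t => g t ^ 2) (.of_integral_ne_zero (h₁.trans_ne one_ne_zero))
      (ae_of_all _ fun t => sq_nonneg _) h₁,
    h₀.mono fun t ht => (Real.sqrt_sq ht).symm⟩

lemma sqrt_deriv'_mem_orbitClosure {q : ℝ → ℝ} (hq : ∀ t, q t = 1) (γ : GammaTilde) :
    (fun t => √(γ.deriv' t)) ∈ orbitClosure q := by
  refine ⟨γ.memLp_sqrt_deriv', fun ε hε => ?_⟩
  set δ := min 1 (ε ^ 2 / 4)
  have hδ₀ : 0 < δ := lt_min one_pos (by positivity)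
  have hδ : δ ∈ Icc (0:ℝ) 1 := ⟨hδ₀.le, min_le_left _ _⟩
  refine ⟨act q (γ.mixId δ hδ), ⟨_, γ.isInGamma_mixId hδ hδ₀, ae_eq_refl _⟩, ?_⟩
  rw [act_const_one hq]
  refine lt_of_pow_lt_pow_left₀ 2 hε.le ((γ.L2dist_sqrt_mixId_sq_le hδ).trans_lt ?_)
  nlinarith [min_le_right 1 (ε ^ 2 / 4)]

theorem closure_of_constant_orbit_general (q₀ : ℝ → ℝ) (hq₀ : ∀ t, q₀ t = 1)
    (g : ℝ → ℝ) :
    (g ∈ orbitClosure q₀ ↔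
      (∫ t in Set.Icc (0:ℝ) 1, (g t)^2 = 1 ∧ ∀ᵐ t ∂μ01, 0 ≤ g t)) ∧
    (g ∈ orbitClosure q₀ ↔
      ∃ γ : GammaTilde, g =ᵐ[μ01] fun t => Real.sqrt (γ.deriv' t)) := by
  have unit_of_closure : g ∈ orbitClosure q₀ → _ :=
    integral_sq_eq_one_and_nonneg_of_mem_orbitClosure hq₀
  have sqrt_of_unit (h : ∫ t in Set.Icc (0:ℝ) 1, (g t)^2 = 1 ∧ ∀ᵐ t ∂μ01, 0 ≤ g t) :
      ∃ γ : GammaTilde, g =ᵐ[μ01] fun t => Real.sqrt (γ.deriv' t) :=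
    exists_gammaTilde_of_integral_sq_eq_one h.1 h.2
  have closure_of_sqrt : (∃ γ : GammaTilde, g =ᵐ[μ01] fun t => Real.sqrt (γ.deriv' t)) →
      g ∈ orbitClosure q₀ := fun ⟨γ, hγ⟩ =>
    mem_orbitClosure_of_ae_eq hγ.symm (sqrt_deriv'_mem_orbitClosure hq₀ γ)
  exact ⟨⟨unit_of_closure, closure_of_sqrt ∘ sqrt_of_unit⟩,
    ⟨sqrt_of_unit ∘ unit_of_closure, closure_of_sqrt⟩⟩

/-- for the constant function `q₀ ≡ 1`, the closure `[q₀]` of the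
orbit `q₀Γ` in `L²(I,ℝ)` is exactly the set of `g ∈ L²(I,ℝ)` with `∫₀¹ g² = 1`
and `g ≥ 0` a.e., and this set equals `{√(γ′) : γ ∈ Γ̃}` (in `L²`, i.e. up to
a.e. equality). -/
theorem closure_of_constant_orbit (q₀ : ℝ → ℝ) (hq₀ : ∀ t, q₀ t = 1)
    (g : ℝ → ℝ) (hg : MemLp g 2 μ01) :
    (g ∈ orbitClosure q₀ ↔
      (∫ t in Set.Icc (0:ℝ) 1, (g t)^2 = 1 ∧ ∀ᵐ t ∂μ01, 0 ≤ g t)) ∧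
    (g ∈ orbitClosure q₀ ↔
      ∃ γ : GammaTilde, g =ᵐ[μ01] fun t => Real.sqrt (γ.deriv' t)) :=
  closure_of_constant_orbit_general q₀ hq₀ g
end
end

section
/- Suppose q, w ∈ L²(I,ℝ) are both in standard form, i.e. there are partitions I = A ∪ B and I = C ∪ D into disjoint measurable sets with q = 1 on A, q = −1 on B, w = 1 on C, w = −1 on D. If q ≠ w as L² functions (i.e. {t ∈ I : q(t) ≠ w(t)} has positive Lebesgue measure), then w ∉ [q]; in fact there is a constant c < 1, independent of γ ∈ Γ, such that ⟨q*γ, w⟩ ≤ c for all γ ∈ Γ. -/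
open MeasureTheory Set Filter

noncomputable section

variable {E : Type*} [NormedAddCommGroup E] [InnerProductSpace ℝ E]

/-!
For `γ ∈ Γ̃` choose a version `g ≥ 0` of `γ'`; then `γ = ψ := ∫₀^· g` on `I` and
`q*γ = √g · q ∘ ψ` a.e. The key measure-theoretic fact is that `ψ` pushes `g · dt` on `(0, t]`
forward to Lebesgue measure on `(0, ψ t]`. It gives the change of variables
`∫₀ᵗ q(ψ s) g(s) ds = ∫₀^{ψ t} q`, and it shows that `ψ` pulls null sets back into `{g = 0}`, so
that `q*γ` only depends on the a.e. class of `q` and we may assume `q, w` measurable and `±1`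
everywhere.

For such `q, w`, `(√g · a - b)² = g + 1 - 2 √g a b` when `a, b = ±1`, so
`⟨q*γ, w⟩ = 1 - ‖q*γ - w‖² / 2`, and it suffices to bound `‖q*γ - w‖` from below uniformly
in `γ`. If `‖q*γ - w‖ ≤ ε ≤ 1`, the same `±1` arithmetic gives `‖g - 1‖₁ ≤ 5ε/2` and
`‖q ∘ ψ - w‖₁ ≤ 2ε²`. Writing `∫₀ᵗ (q - w)` as `∫_{ψ t}^t q + ∫₀ᵗ q(ψ)(g - 1) + ∫₀ᵗ (q(ψ) - w)`
then gives `|∫₀ᵗ (q - w)| ≤ 7ε` for all `t ∈ I`. So if `ε` could be arbitrarily small, every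
primitive of `q - w` would vanish on `I`, and `q = w` a.e. by Lebesgue differentiation.
-/

theorem abs_intervalIntegral_le_integral_Icc_abs {f : ℝ → ℝ} {a b t : ℝ}
    (hf : IntegrableOn f (Icc a b)) (ht : t ∈ Icc a b) :
    |∫ x in a..t, f x| ≤ ∫ x in Icc a b, |f x| := by
  refine (intervalIntegral.abs_integral_le_integral_abs ht.1).trans ?_
  rw [intervalIntegral.integral_of_le ht.1]
  exact setIntegral_mono_set hf.abs (ae_of_all _ fun _ => abs_nonneg _)
    (Ioc_subset_Icc_self.trans (Icc_subset_Icc_right ht.2)).eventuallyLE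

theorem ae_eq_zero_of_forall_intervalIntegral_eq_zero {F : Type*} [NormedAddCommGroup F]
    [NormedSpace ℝ F] [CompleteSpace F] {f : ℝ → F} {a b : ℝ}
    (hf : IntervalIntegrable f volume a b) (h : ∀ t ∈ Icc a b, ∫ x in a..t, f x = 0) :
    ∀ᵐ x ∂volume.restrict (Icc a b), f x = 0 := by
  rw [← Measure.restrict_congr_set Ioo_ae_eq_Icc, ae_restrict_iff' measurableSet_Ioo]
  filter_upwards [hf.ae_hasDerivAt_integral] with x hderiv hx
  have hab : a ≤ b := (hx.1.trans hx.2).le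
  have hxI : x ∈ uIcc a b := by rw [uIcc_of_le hab]; exact Ioo_subset_Icc_self hx
  have hzero : HasDerivAt (fun y => ∫ t in a..y, f t) 0 x :=
    (hasDerivAt_const x 0).congr_of_eventuallyEq <|
      eventually_of_mem (Ioo_mem_nhds hx.1 hx.2) fun y hy => h y (Ioo_subset_Icc_self hy)
  exact (hderiv hxI a left_mem_uIcc).unique hzero

theorem Monotone.exists_preimage_Iic_inter_Ioc_eq {f : ℝ → ℝ} (hmono : Monotone f)
    (hf : Continuous f) {a t x : ℝ} (hat : a ≤ t) (hx : f a ≤ x) :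
    ∃ σ ∈ Icc a t, f ⁻¹' Iic x ∩ Ioc a t = Ioc a σ ∧ f σ = min x (f t) := by
  set K := Icc a t ∩ f ⁻¹' Iic x
  have hKbdd : BddAbove K := ⟨t, fun s hs => hs.1.2⟩
  obtain ⟨⟨hσa, hσt⟩, hσx⟩ : sSup K ∈ K :=
    (isClosed_Icc.inter (isClosed_Iic.preimage hf)).csSup_mem ⟨a, left_mem_Icc.2 hat, hx⟩ hKbdd
  refine ⟨sSup K, ⟨hσa, hσt⟩, ?_, ?_⟩
  · ext s
    constructor
    · rintro ⟨hsx, has, hst⟩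
      exact ⟨has, le_csSup hKbdd ⟨⟨has.le, hst⟩, hsx⟩⟩
    · rintro ⟨has, hsσ⟩
      exact ⟨(hmono hsσ).trans hσx, has, hsσ.trans hσt⟩
  · rcases le_total (f t) x with htx | hxt
    · rw [min_eq_right htx, le_antisymm hσt (le_csSup hKbdd ⟨right_mem_Icc.2 hat, htx⟩)]
    · -- the level `x` is attained on `[sSup K, t]`, and by maximality only at `sSup K`
      obtain ⟨s, ⟨hσs, hst⟩, hs⟩ := intermediate_value_Icc hσt hf.continuousOn ⟨hσx, hxt⟩
      rw [min_eq_left hxt, ← le_antisymm (le_csSup hKbdd ⟨⟨hσa.trans hσs, hst⟩, hs.le⟩) hσs, hs]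

theorem exists_measurable_sign_ae_eq {α : Type*} [MeasurableSpace α] {μ : Measure α} {q : α → ℝ}
    (hq : AEMeasurable q μ) (hq1 : ∀ᵐ x ∂μ, q x = 1 ∨ q x = -1) :
    ∃ q' : α → ℝ, Measurable q' ∧ (∀ x, q' x = 1 ∨ q' x = -1) ∧ q =ᵐ[μ] q' := by
  refine ⟨fun x => if hq.mk q x = 1 then 1 else -1,
    Measurable.ite (hq.measurable_mk (measurableSet_singleton 1)) measurable_const
      measurable_const, fun x => by dsimp only; split_ifs <;> simp, ?_⟩
  filter_upwards [hq.ae_eq_mk, hq1] with x hx h1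
  rcases h1 with h | h <;> simp [← hx, h]

theorem intervalIntegrable_of_sign {f : ℝ → ℝ} (hfm : Measurable f)
    (hf : ∀ x, f x = 1 ∨ f x = -1) (a b : ℝ) : IntervalIntegrable f volume a b :=
  (intervalIntegrable_const (c := (1:ℝ))).mono_fun hfm.aestronglyMeasurable
    (ae_of_all _ fun x => by rcases hf x with h | h <;> simp [h])

section Signs

variable {a b : ℝ}

theorem sq_mul_sub_eq_of_sign (ha : a = 1 ∨ a = -1) (hb : b = 1 ∨ b = -1) (y : ℝ) :
    (y * a - b) ^ 2 = y ^ 2 + 1 - 2 * (y * a * b) := by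
  rcases ha with rfl | rfl <;> rcases hb with rfl | rfl <;> ring

theorem abs_sub_le_two_mul_sq_of_sign (ha : a = 1 ∨ a = -1) (hb : b = 1 ∨ b = -1) {y : ℝ}
    (hy : 0 ≤ y) : |a - b| ≤ 2 * (y * a - b) ^ 2 := by
  rcases ha with rfl | rfl <;> rcases hb with rfl | rfl <;> norm_num <;>
    nlinarith [le_abs_self (y + 1), neg_le_abs (-y - 1)]

theorem two_mul_abs_sq_sub_one_le_of_sign (ha : a = 1 ∨ a = -1) (hb : b = 1 ∨ b = -1) {y : ℝ}
    (hy : 0 ≤ y) (ε : ℝ) :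
    2 * ε * |y ^ 2 - 1| ≤ (y * a - b) ^ 2 + 2 * ε ^ 2 * (y ^ 2 + 1) := by
  have hfactor : |y ^ 2 - 1| = |y - 1| * (y + 1) := by
    rw [show y ^ 2 - 1 = (y - 1) * (y + 1) by ring, abs_mul,
      abs_of_nonneg (by linarith : (0:ℝ) ≤ y + 1)]
  have hsign : (y - 1) ^ 2 ≤ (y * a - b) ^ 2 := by
    rcases ha with rfl | rfl <;> rcases hb with rfl | rfl <;> nlinarith
  rw [hfactor]
  nlinarith [sq_nonneg (|y - 1| - ε * (y + 1)), sq_abs (y - 1),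
    mul_nonneg (sq_nonneg ε) (sq_nonneg (y - 1))]

end Signs

def primitive (g : ℝ → ℝ) (t : ℝ) : ℝ := ∫ u in (0:ℝ)..t, g u

section Primitive

variable {g : ℝ → ℝ}

theorem primitive_zero : primitive g 0 = 0 := intervalIntegral.integral_same

theorem continuous_primitive (hg : Integrable g) : Continuous (primitive g) :=
  intervalIntegral.continuous_primitive (fun _ _ => hg.intervalIntegrable) 0

theorem primitive_sub_primitive (hg : Integrable g) (a b : ℝ) :
    primitive g b - primitive g a = ∫ u in a..b, g u :=
  intervalIntegral.integral_interval_sub_left hg.intervalIntegrable hg.intervalIntegrable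

theorem monotone_primitive (hg0 : ∀ s, 0 ≤ g s) (hg : Integrable g) : Monotone (primitive g) :=
  fun a b hab => sub_nonneg.1 <| primitive_sub_primitive hg a b ▸
    intervalIntegral.integral_nonneg hab fun u _ => hg0 u

theorem abs_primitive_sub_self_le (hg : Integrable g) {t : ℝ} (ht : t ∈ Icc (0:ℝ) 1) :
    |primitive g t - t| ≤ ∫ s in Icc 0 1, |g s - 1| := by
  have hsub : primitive g t - t = ∫ s in 0..t, (g s - 1) := by
    rw [intervalIntegral.integral_sub hg.intervalIntegrable intervalIntegrable_const,
      intervalIntegral.integral_const]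
    simp [primitive]
  rw [hsub]
  exact abs_intervalIntegral_le_integral_Icc_abs
    (hg.integrableOn.sub (integrableOn_const measure_Icc_lt_top.ne)) ht

theorem map_primitive_withDensity (hg0 : ∀ s, 0 ≤ g s) (hg : Integrable g) {t : ℝ}
    (ht : 0 ≤ t) :
    ((volume.restrict (Ioc 0 t)).withDensity fun s => ENNReal.ofReal (g s)).map (primitive g)
      = volume.restrict (Ioc 0 (primitive g t)) := by
  have hψ := continuous_primitive hg
  have hmono := monotone_primitive hg0 hg
  have := isFiniteMeasure_withDensity_ofReal (hg.restrict (s := Ioc 0 t)).hasFiniteIntegral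
  refine Measure.ext_of_Iic _ _ fun x => ?_
  rw [Measure.map_apply hψ.measurable measurableSet_Iic, withDensity_apply' _ _,
    Measure.restrict_restrict' measurableSet_Ioc, Measure.restrict_apply measurableSet_Iic,
    inter_comm (Iic x), Ioc_inter_Iic]
  rcases lt_or_ge x 0 with hx | hx
  · have hempty : primitive g ⁻¹' Iic x ∩ Ioc 0 t = ∅ :=
      eq_empty_of_forall_notMem fun s ⟨hsx, hs, _⟩ =>
        (hx.trans_le (primitive_zero (g := g) ▸ hmono hs.le)).not_ge hsx
    rw [hempty, Measure.restrict_empty, lintegral_zero_measure,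
      Ioc_eq_empty ((min_le_right _ _).trans hx.le).not_gt, measure_empty]
  · obtain ⟨σ, hσ, hpre, hψσ⟩ :=
      hmono.exists_preimage_Iic_inter_Ioc_eq hψ ht (primitive_zero (g := g) ▸ hx)
    rw [hpre, ← ofReal_integral_eq_lintegral_ofReal hg.integrableOn (ae_of_all _ fun s => hg0 s),
      ← intervalIntegral.integral_of_le hσ.1, Real.volume_Ioc, sub_zero, min_comm]
    exact congrArg ENNReal.ofReal hψσ

theorem integral_comp_primitive_mul (hg0 : ∀ s, 0 ≤ g s) (hg : Integrable g) {q : ℝ → ℝ}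
    (hq : Measurable q) {t : ℝ} (ht : 0 ≤ t) :
    ∫ s in 0..t, q (primitive g s) * g s = ∫ x in 0..primitive g t, q x := by
  have hψt : 0 ≤ primitive g t := primitive_zero (g := g) ▸ monotone_primitive hg0 hg ht
  rw [intervalIntegral.integral_of_le ht, intervalIntegral.integral_of_le hψt,
    ← map_primitive_withDensity hg0 hg ht,
    integral_map (continuous_primitive hg).aemeasurable hq.aestronglyMeasurable,
    integral_withDensity_eq_integral_toReal_smul₀ hg.aemeasurable.ennreal_ofReal.restrict
      (ae_of_all _ fun _ => ENNReal.ofReal_lt_top)]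
  simp_rw [ENNReal.toReal_ofReal (hg0 _), smul_eq_mul, mul_comm]

theorem ae_primitive_mem_imp_eq_zero (hg0 : ∀ s, 0 ≤ g s) (hg : Integrable g) {N : Set ℝ}
    (hN : volume N = 0) {t : ℝ} (ht : 0 ≤ t) :
    ∀ᵐ s ∂volume.restrict (Icc 0 t), primitive g s ∈ N → g s = 0 := by
  obtain ⟨N', hNN', hN'm, hN'0⟩ := exists_measurable_superset_of_null hN
  have hpull : ((volume.restrict (Ioc 0 t)).withDensity fun s => ENNReal.ofReal (g s))
      (primitive g ⁻¹' N') = 0 := by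
    rw [← Measure.map_apply (continuous_primitive hg).measurable hN'm,
      map_primitive_withDensity hg0 hg ht, Measure.restrict_apply hN'm]
    exact measure_mono_null inter_subset_left hN'0
  rw [withDensity_apply_eq_zero' hg.aemeasurable.ennreal_ofReal.restrict,
    measure_eq_zero_iff_ae_notMem, Measure.restrict_congr_set Ioc_ae_eq_Icc] at hpull
  filter_upwards [hpull] with s hs hsN
  have : ENNReal.ofReal (g s) = 0 := not_not.1 fun h => hs ⟨h, hNN' hsN⟩
  exact le_antisymm (ENNReal.ofReal_eq_zero.1 this) (hg0 s)

end Primitive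

theorem L2dist_congr_ae {F : Type*} [NormedAddCommGroup F] {f f' h h' : ℝ → F}
    (hf : f =ᵐ[μ01] f') (hh : h =ᵐ[μ01] h') : L2dist f h = L2dist f' h' := by
  unfold L2dist
  congr 1
  refine integral_congr_ae ?_
  filter_upwards [hf, hh] with t hft hht
  rw [hft, hht]

theorem L2inner_congr_ae {f f' h h' : ℝ → E} (hf : f =ᵐ[μ01] f') (hh : h =ᵐ[μ01] h') :
    L2inner f h = L2inner f' h' := by
  unfold L2inner
  refine integral_congr_ae ?_
  filter_upwards [hf, hh] with t hft hht
  rw [hft, hht]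

theorem L2dist_sq (f h : ℝ → ℝ) : L2dist f h ^ 2 = ∫ t in Icc (0:ℝ) 1, (f t - h t) ^ 2 := by
  simp only [L2dist, Real.norm_eq_abs, sq_abs]
  exact Real.sq_sqrt (integral_nonneg fun _ => sq_nonneg _)

theorem L2inner_eq_integral_mul (f h : ℝ → ℝ) :
    L2inner f h = ∫ t in Icc (0:ℝ) 1, f t * h t := by
  simp only [L2inner, RCLike.inner_apply, conj_trivial, mul_comm (h _)]

/-- The derivative of an element of `Γ̃`, modified on a null set; integrability on all of `ℝ`
makes its primitive continuous. -/
structure IsUnitDensity (g : ℝ → ℝ) : Prop where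
  nonneg : ∀ s, 0 ≤ g s
  integrable : Integrable g
  primitive_one : primitive g 1 = 1

/-- The action `q*γ` of the `γ ∈ Γ̃` with derivative `g`. -/
def actDensity (q : ℝ → E) (g : ℝ → ℝ) : ℝ → E :=
  fun s => Real.sqrt (g s) • q (primitive g s)

theorem GammaTilde.exists_isUnitDensity (γ : GammaTilde) :
    ∃ g, IsUnitDensity g ∧ ∀ q : ℝ → E, act q γ =ᵐ[μ01] actDensity q g := by
  set g := (Icc (0:ℝ) 1).indicator fun s => max (γ.deriv' s) 0
  have hmax : (fun s => max (γ.deriv' s) 0) =ᵐ[μ01] γ.deriv' := by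
    filter_upwards [γ.nonneg] with s hs using max_eq_left hs
  have hgγ : g =ᵐ[μ01] γ.deriv' := by
    filter_upwards [hmax, ae_restrict_mem measurableSet_Icc] with s hs hsI
    simp [g, hsI, hs]
  have hprim : ∀ t ∈ Icc (0:ℝ) 1, primitive g t = γ.toFun t := by
    intro t ht
    rw [γ.eq_integral t ht]
    refine intervalIntegral.integral_congr_ae ?_
    filter_upwards [(ae_restrict_iff' measurableSet_Icc).1 hgγ] with s hs hsI
    rw [uIoc_of_le ht.1] at hsI
    exact hs ⟨hsI.1.le, hsI.2.trans ht.2⟩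
  have hint : Integrable g :=
    (γ.integrableOn.congr_fun_ae hmax.symm).integrable_indicator measurableSet_Icc
  refine ⟨g, ⟨fun s => ?_, hint, ?_⟩, fun q => ?_⟩
  · exact indicator_nonneg (fun _ _ => le_max_right _ _) s
  · rw [hprim 1 (right_mem_Icc.2 zero_le_one), γ.map_one]
  · filter_upwards [hgγ, ae_restrict_mem measurableSet_Icc] with s hs hsI
    simp [act, actDensity, hs, hprim s hsI]

namespace IsUnitDensity

variable {g q w : ℝ → ℝ}

theorem primitive_mem_Icc (hg : IsUnitDensity g) {t : ℝ} (ht : t ∈ Icc (0:ℝ) 1) :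
    primitive g t ∈ Icc (0:ℝ) 1 := by
  have hmono := monotone_primitive hg.nonneg hg.integrable
  exact ⟨primitive_zero (g := g) ▸ hmono ht.1, hg.primitive_one ▸ hmono ht.2⟩

theorem actDensity_ae_congr (hg : IsUnitDensity g) {q q' : ℝ → E} (hqq : q =ᵐ[μ01] q') :
    actDensity q g =ᵐ[μ01] actDensity q' g := by
  have hN : volume ({x | q x ≠ q' x} ∩ Icc 0 1) = 0 := by
    rwa [μ01, EventuallyEq, ae_iff, Measure.restrict_apply' measurableSet_Icc] at hqq
  filter_upwards [ae_primitive_mem_imp_eq_zero hg.nonneg hg.integrable hN zero_le_one,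
    ae_restrict_mem measurableSet_Icc] with s hs hsI
  by_cases hqs : q (primitive g s) = q' (primitive g s)
  · simp [actDensity, hqs]
  · simp [actDensity, hs ⟨hqs, hg.primitive_mem_Icc hsI⟩]

theorem integrableOn_add_one (hg : IsUnitDensity g) :
    IntegrableOn (fun s => g s + 1) (Icc 0 1) :=
  hg.integrable.integrableOn.add (integrableOn_const measure_Icc_lt_top.ne)

theorem integral_add_one (hg : IsUnitDensity g) : ∫ s in Icc (0:ℝ) 1, (g s + 1) = 2 := by
  rw [integral_add hg.integrable.integrableOn (integrableOn_const measure_Icc_lt_top.ne),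
    integral_Icc_eq_integral_Ioc, ← intervalIntegral.integral_of_le zero_le_one,
    show ∫ s in (0:ℝ)..1, g s = 1 from hg.primitive_one]
  norm_num

theorem sq_actDensity_sub_eq (hg : IsUnitDensity g) (hq : ∀ x, q x = 1 ∨ q x = -1)
    (hw : ∀ x, w x = 1 ∨ w x = -1) (s : ℝ) :
    (actDensity q g s - w s) ^ 2 = g s + 1 - 2 * (actDensity q g s * w s) := by
  rw [actDensity, smul_eq_mul, sq_mul_sub_eq_of_sign (hq _) (hw _), Real.sq_sqrt (hg.nonneg s)]

theorem integrableOn_actDensity_mul (hg : IsUnitDensity g) (hqm : Measurable q)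
    (hwm : Measurable w) (hq : ∀ x, q x = 1 ∨ q x = -1) (hw : ∀ x, w x = 1 ∨ w x = -1) :
    IntegrableOn (fun s => actDensity q g s * w s) (Icc 0 1) := by
  have hmeas : AEStronglyMeasurable (fun s => actDensity q g s * w s) :=
    ((Real.continuous_sqrt.comp_aestronglyMeasurable hg.integrable.aestronglyMeasurable).mul
      (hqm.comp (continuous_primitive hg.integrable).measurable).aestronglyMeasurable).mul
      hwm.aestronglyMeasurable
  refine Integrable.mono' hg.integrableOn_add_one hmeas.restrict (ae_of_all _ fun s => ?_)
  have hsqrt := Real.sq_sqrt (hg.nonneg s)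
  rcases hq (primitive g s) with h | h <;> rcases hw s with h' | h' <;>
    simp only [actDensity, smul_eq_mul, h, h', Real.norm_eq_abs, mul_one, mul_neg, neg_neg,
      abs_neg, abs_of_nonneg (Real.sqrt_nonneg _)] <;>
    nlinarith [Real.sqrt_nonneg (g s)]

theorem integrableOn_sq_actDensity_sub (hg : IsUnitDensity g) (hqm : Measurable q)
    (hwm : Measurable w) (hq : ∀ x, q x = 1 ∨ q x = -1) (hw : ∀ x, w x = 1 ∨ w x = -1) :
    IntegrableOn (fun s => (actDensity q g s - w s) ^ 2) (Icc 0 1) := by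
  simp_rw [hg.sq_actDensity_sub_eq hq hw]
  exact hg.integrableOn_add_one.sub ((hg.integrableOn_actDensity_mul hqm hwm hq hw).const_mul 2)

theorem integral_sq_actDensity_sub (hg : IsUnitDensity g) (hqm : Measurable q)
    (hwm : Measurable w) (hq : ∀ x, q x = 1 ∨ q x = -1) (hw : ∀ x, w x = 1 ∨ w x = -1) :
    ∫ s in Icc 0 1, (actDensity q g s - w s) ^ 2
      = 2 - 2 * ∫ s in Icc 0 1, actDensity q g s * w s := by
  simp_rw [hg.sq_actDensity_sub_eq hq hw]
  rw [integral_sub hg.integrableOn_add_one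
    ((hg.integrableOn_actDensity_mul hqm hwm hq hw).const_mul 2), integral_const_mul,
    hg.integral_add_one]

theorem integral_abs_comp_sub_le (hg : IsUnitDensity g) (hqm : Measurable q)
    (hwm : Measurable w) (hq : ∀ x, q x = 1 ∨ q x = -1) (hw : ∀ x, w x = 1 ∨ w x = -1) :
    ∫ s in Icc 0 1, |q (primitive g s) - w s|
      ≤ 2 * ∫ s in Icc 0 1, (actDensity q g s - w s) ^ 2 := by
  rw [← integral_const_mul]
  refine integral_mono_of_nonneg (ae_of_all _ fun _ => abs_nonneg _)
    ((hg.integrableOn_sq_actDensity_sub hqm hwm hq hw).const_mul 2) (ae_of_all _ fun s => ?_)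
  exact abs_sub_le_two_mul_sq_of_sign (hq _) (hw _) (Real.sqrt_nonneg _)

theorem two_mul_integral_abs_sub_one_le (hg : IsUnitDensity g) (hqm : Measurable q)
    (hwm : Measurable w) (hq : ∀ x, q x = 1 ∨ q x = -1) (hw : ∀ x, w x = 1 ∨ w x = -1)
    {ε : ℝ} (hε : 0 ≤ ε) :
    2 * ε * ∫ s in Icc 0 1, |g s - 1|
      ≤ (∫ s in Icc 0 1, (actDensity q g s - w s) ^ 2) + 4 * ε ^ 2 := by
  have hsq := hg.integrableOn_sq_actDensity_sub hqm hwm hq hw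
  calc 2 * ε * ∫ s in Icc 0 1, |g s - 1|
      = ∫ s in Icc 0 1, 2 * ε * |g s - 1| := (integral_const_mul _ _).symm
    _ ≤ ∫ s in Icc 0 1, ((actDensity q g s - w s) ^ 2 + 2 * ε ^ 2 * (g s + 1)) := by
      refine integral_mono_of_nonneg (ae_of_all _ fun _ => by positivity)
        (hsq.add (hg.integrableOn_add_one.const_mul _)) (ae_of_all _ fun s => ?_)
      have := two_mul_abs_sq_sub_one_le_of_sign (hq (primitive g s)) (hw s)
        (Real.sqrt_nonneg (g s)) ε
      rwa [Real.sq_sqrt (hg.nonneg s)] at this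
    _ = (∫ s in Icc 0 1, (actDensity q g s - w s) ^ 2) + 4 * ε ^ 2 := by
      rw [integral_add hsq (hg.integrableOn_add_one.const_mul _), integral_const_mul,
        hg.integral_add_one]
      ring

theorem intervalIntegral_comp_mul_sub_one (hg : IsUnitDensity g) (hqm : Measurable q)
    (hq : ∀ x, q x = 1 ∨ q x = -1) {t : ℝ} (ht : 0 ≤ t) :
    ∫ s in 0..t, q (primitive g s) * (g s - 1)
      = (∫ x in 0..primitive g t, q x) - ∫ s in 0..t, q (primitive g s) := by
  have hqpm : Measurable fun s => q (primitive g s) :=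
    hqm.comp (continuous_primitive hg.integrable).measurable
  rw [← integral_comp_primitive_mul hg.nonneg hg.integrable hqm ht,
    ← intervalIntegral.integral_sub _ (intervalIntegrable_of_sign hqpm (fun _ => hq _) 0 t)]
  · simp_rw [mul_sub, mul_one]
  · refine (hg.integrable.bdd_mul (c := 1) hqpm.aestronglyMeasurable
      (ae_of_all _ fun s => ?_)).intervalIntegrable
    rcases hq (primitive g s) with h | h <;> simp [h]

theorem abs_intervalIntegral_sub_le (hg : IsUnitDensity g) (hqm : Measurable q)
    (hwm : Measurable w) (hq : ∀ x, q x = 1 ∨ q x = -1) (hw : ∀ x, w x = 1 ∨ w x = -1)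
    {t : ℝ} (ht : t ∈ Icc (0:ℝ) 1) :
    |∫ x in 0..t, (q x - w x)|
      ≤ 2 * (∫ s in Icc 0 1, |g s - 1|) + ∫ s in Icc 0 1, |q (primitive g s) - w s| := by
  have hqpm : Measurable fun s => q (primitive g s) :=
    hqm.comp (continuous_primitive hg.integrable).measurable
  have hqp : ∀ s, q (primitive g s) = 1 ∨ q (primitive g s) = -1 := fun s => hq _
  have hqp_bdd : ∀ s, ‖q (primitive g s)‖ ≤ 1 := fun s => by rcases hqp s with h | h <;> simp [h]
  have hqi := intervalIntegrable_of_sign hqm hq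
  have hwi := intervalIntegrable_of_sign hwm hw
  have hqpi := intervalIntegrable_of_sign hqpm hqp
  have hshift : |∫ x in t..primitive g t, q x| ≤ ∫ s in Icc 0 1, |g s - 1| := by
    refine le_trans ?_ (abs_primitive_sub_self_le hg.integrable ht)
    simpa using intervalIntegral.norm_integral_le_of_norm_le_const (C := 1)
      fun x _ => show ‖q x‖ ≤ 1 by rcases hq x with h | h <;> simp [h]
  have hdefect : |∫ s in 0..t, q (primitive g s) * (g s - 1)| ≤ ∫ s in Icc 0 1, |g s - 1| := by
    refine (abs_intervalIntegral_le_integral_Icc_abs ((hg.integrable.integrableOn.sub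
      (integrableOn_const measure_Icc_lt_top.ne)).bdd_mul hqpm.aestronglyMeasurable.restrict
      (ae_of_all _ hqp_bdd)) ht).trans_eq (integral_congr_ae (ae_of_all _ fun s => ?_))
    rcases hqp s with h | h <;> simp [h, abs_sub_comm]
  have htail : |∫ s in 0..t, (q (primitive g s) - w s)|
      ≤ ∫ s in Icc 0 1, |q (primitive g s) - w s| :=
    abs_intervalIntegral_le_integral_Icc_abs
      ((intervalIntegrable_iff_integrableOn_Icc_of_le zero_le_one).1
        ((hqpi 0 1).sub (hwi 0 1))) ht
  have hsplit : ∫ x in 0..t, (q x - w x)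
      = -(∫ x in t..primitive g t, q x) + (∫ s in 0..t, q (primitive g s) * (g s - 1))
        + ∫ s in 0..t, (q (primitive g s) - w s) := by
    rw [hg.intervalIntegral_comp_mul_sub_one hqm hq ht.1,
      intervalIntegral.integral_sub (hqi 0 t) (hwi 0 t),
      intervalIntegral.integral_sub (hqpi 0 t) (hwi 0 t),
      ← intervalIntegral.integral_interval_sub_left (hqi 0 (primitive g t)) (hqi 0 t)]
    ring
  rw [hsplit]
  refine (abs_add_three _ _ _).trans ?_
  rw [abs_neg]
  linarith

theorem abs_intervalIntegral_sub_le_of_sq_le (hg : IsUnitDensity g) (hqm : Measurable q)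
    (hwm : Measurable w) (hq : ∀ x, q x = 1 ∨ q x = -1) (hw : ∀ x, w x = 1 ∨ w x = -1)
    {ε : ℝ} (hε : 0 < ε) (hε1 : ε ≤ 1)
    (hclose : ∫ s in Icc 0 1, (actDensity q g s - w s) ^ 2 ≤ ε ^ 2)
    {t : ℝ} (ht : t ∈ Icc (0:ℝ) 1) :
    |∫ x in 0..t, (q x - w x)| ≤ 7 * ε := by
  have htransport := hg.abs_intervalIntegral_sub_le hqm hwm hq hw ht
  have hcomp := hg.integral_abs_comp_sub_le hqm hwm hq hw
  have hdensity := hg.two_mul_integral_abs_sub_one_le hqm hwm hq hw hε.le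
  have hdensity' : ∫ s in Icc 0 1, |g s - 1| ≤ 5 / 2 * ε := by nlinarith
  nlinarith

end IsUnitDensity

theorem act_ae_congr {q q' : ℝ → E} (hqq : q =ᵐ[μ01] q') (γ : GammaTilde) :
    act q γ =ᵐ[μ01] act q' γ := by
  obtain ⟨g, hg, hγg⟩ := γ.exists_isUnitDensity (E := E)
  exact (hγg q).trans ((hg.actDensity_ae_congr hqq).trans (hγg q').symm)

section Orbits

variable {q w : ℝ → ℝ}

theorem L2inner_act_eq_one_sub (hqm : Measurable q) (hwm : Measurable w)
    (hq : ∀ x, q x = 1 ∨ q x = -1) (hw : ∀ x, w x = 1 ∨ w x = -1) (γ : GammaTilde) :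
    L2inner (act q γ) w = 1 - L2dist (act q γ) w ^ 2 / 2 := by
  obtain ⟨g, hg, hγg⟩ := γ.exists_isUnitDensity (E := ℝ)
  rw [L2inner_congr_ae (hγg q) EventuallyEq.rfl, L2dist_congr_ae (hγg q) EventuallyEq.rfl,
    L2inner_eq_integral_mul, L2dist_sq, hg.integral_sq_actDensity_sub hqm hwm hq hw]
  ring

theorem exists_pos_le_L2dist_act (hqm : Measurable q) (hwm : Measurable w)
    (hq : ∀ x, q x = 1 ∨ q x = -1) (hw : ∀ x, w x = 1 ∨ w x = -1) (hqw : ¬ q =ᵐ[μ01] w) :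
    ∃ δ > 0, ∀ γ : GammaTilde, δ ≤ L2dist (act q γ) w := by
  by_contra! hsmall
  refine hqw ?_
  have hprimitive : ∀ t ∈ Icc (0:ℝ) 1, ∫ x in 0..t, (q x - w x) = 0 := by
    intro t ht
    refine abs_nonpos_iff.1 (le_of_forall_pos_le_add fun η hη => ?_)
    obtain ⟨γ, hγ⟩ := hsmall (min 1 (η / 7)) (by positivity)
    obtain ⟨g, hg, hγg⟩ := γ.exists_isUnitDensity (E := ℝ)
    have hclose : ∫ s in Icc 0 1, (actDensity q g s - w s) ^ 2 ≤ min 1 (η / 7) ^ 2 := by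
      rw [← L2dist_sq, ← L2dist_congr_ae (hγg q) EventuallyEq.rfl]
      exact pow_le_pow_left₀ (Real.sqrt_nonneg _) hγ.le 2
    have := hg.abs_intervalIntegral_sub_le_of_sq_le hqm hwm hq hw (by positivity)
      (min_le_left _ _) hclose ht
    linarith [min_le_right 1 (η / 7)]
  filter_upwards [ae_eq_zero_of_forall_intervalIntegral_eq_zero
    ((intervalIntegrable_of_sign hqm hq 0 1).sub (intervalIntegrable_of_sign hwm hw 0 1))
    hprimitive] with x hx
  exact sub_eq_zero.1 hx

end Orbits

/-- if `q, w ∈ L²(I,ℝ)` are in standard form (each takes only the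
values `±1` on `I`) and differ on a set of positive measure, then `w ∉ [q]`;
indeed there is a constant `c < 1`, independent of `γ ∈ Γ`, with
`⟨q*γ, w⟩ ≤ c` for all `γ ∈ Γ`. -/
theorem standard_forms_in_distinct_orbits (q w : ℝ → ℝ)
    (hq : MemLp q 2 μ01) (hw : MemLp w 2 μ01)
    (hqsf : ∀ t ∈ Set.Icc (0:ℝ) 1, q t = 1 ∨ q t = -1)
    (hwsf : ∀ t ∈ Set.Icc (0:ℝ) 1, w t = 1 ∨ w t = -1)
    (hne : 0 < volume {t ∈ Set.Icc (0:ℝ) 1 | q t ≠ w t}) :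
    w ∉ orbitClosure q ∧
    ∃ c : ℝ, c < 1 ∧ ∀ γ : GammaTilde, γ.IsInGamma → L2inner (act q γ) w ≤ c := by
  obtain ⟨q₁, hq₁m, hq₁, hqq₁⟩ := exists_measurable_sign_ae_eq hq.1.aemeasurable
    ((ae_restrict_iff' measurableSet_Icc).2 (ae_of_all _ hqsf))
  obtain ⟨w₁, hw₁m, hw₁, hww₁⟩ := exists_measurable_sign_ae_eq hw.1.aemeasurable
    ((ae_restrict_iff' measurableSet_Icc).2 (ae_of_all _ hwsf))
  have hqw₁ : ¬ q₁ =ᵐ[μ01] w₁ := fun h => by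
    have hqw : ∀ᵐ t, t ∈ Icc (0:ℝ) 1 → q t = w t :=
      (ae_restrict_iff' measurableSet_Icc).1 (hqq₁.trans (h.trans hww₁.symm))
    rw [ae_iff] at hqw
    exact hne.ne' (by simpa only [Classical.not_imp] using hqw)
  obtain ⟨δ, hδ, hgap⟩ := exists_pos_le_L2dist_act hq₁m hw₁m hq₁ hw₁ hqw₁
  refine ⟨fun ⟨_, hclose⟩ => ?_, 1 - δ ^ 2 / 2, by nlinarith, fun γ _ => ?_⟩
  · obtain ⟨r, ⟨γ, -, hr⟩, hrw⟩ := hclose δ hδ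
    rw [L2dist_congr_ae (hr.trans (act_ae_congr hqq₁ γ)) hww₁] at hrw
    exact (hgap γ).not_gt hrw
  · rw [L2inner_congr_ae (act_ae_congr hqq₁ γ) hww₁, L2inner_act_eq_one_sub hq₁m hw₁m hq₁ hw₁]
    nlinarith [hgap γ]
end
end

section
/- Let N ≥ 1 and let q : I → ℝᴺ be an L² function such that q⁻¹(0) has Lebesgue measure 0. Then there exists an orthonormal basis u₁, …, u_N of ℝᴺ such that, writing H_k for the hyperplane u_k^⊥ (the orthogonal complement of u_k), the set q⁻¹(H_k) has Lebesgue measure 0 for every k = 1, …, N. (The hyperplanes H₁, …, H_N are pairwise orthogonal in the sense that their unit normals u₁, …, u_N are pairwise orthogonal.) -/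
open MeasureTheory Set Filter

noncomputable section

variable {E : Type*} [NormedAddCommGroup E] [InnerProductSpace ℝ E]

/-!
Rotate the coordinate planes `(2j, 2j+1)` of `ℝᴺ` simultaneously, the `j`-th one at angular
speed `j + 1`, and apply these rotations `R s` to a fixed orthonormal basis `u` none of whose
vectors has a vanishing coordinate pair (nor, for odd `N`, a vanishing last coordinate): the
reflection of the standard basis in the diagonal line, with entries `2/N - δᵢₖ`, will do. For
`x ≠ 0`, `s ↦ ⟪R s (u k), x⟫` is then a nonzero real trigonometric polynomial, which has only
countably many zeros. By Fubini for the image measure of `q` against Lebesgue measure in `s`,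
for almost every `s` the basis `R s u` has `⟪R s (u k), q t⟫ ≠ 0` for almost every `t`.
-/

open Complex ComplexConjugate Finset

lemma countable_setOf_cexp_mul_I_eq (z : ℂ) : {s : ℝ | cexp (s * I) = z}.Countable := by
  rcases {s : ℝ | cexp (s * I) = z}.eq_empty_or_nonempty with h | ⟨s₀, hs₀⟩
  · simp [h]
  refine (countable_range fun n : ℤ => s₀ + n * (2 * Real.pi)).mono fun s hs => ?_
  obtain ⟨n, hn⟩ := exp_eq_exp_iff_exists_int.1 (hs.trans hs₀.symm)
  refine ⟨n, ofReal_injective (mul_right_cancel₀ I_ne_zero ?_)⟩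
  push_cast
  rw [hn]
  ring

open Polynomial in
lemma countable_setOf_eval_cexp_mul_I_eq_zero {Q : ℂ[X]} (hQ : Q ≠ 0) :
    {s : ℝ | Q.eval (cexp (s * I)) = 0}.Countable :=
  ((Q.finite_setOfPred_isRoot hQ).countable.biUnion fun z _ => countable_setOf_cexp_mul_I_eq z).mono
    fun s hs => mem_biUnion (x := cexp (s * I)) hs rfl

section TrigNumerator

open Polynomial

variable (a : ℝ) (W : ℕ → ℂ) (m : ℕ)

def trigNumerator : ℂ[X] :=
  C (2 * a : ℂ) * X ^ m +
    ∑ j ∈ range m, (C (W j) * X ^ (m + (j + 1)) + C (conj (W j)) * X ^ (m - (j + 1)))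

lemma eval_cexp_mul_I_trigNumerator (s : ℝ) :
    (trigNumerator a W m).eval (cexp (s * I)) =
      2 * cexp (s * I) ^ m * (a + ∑ j ∈ range m, (W j * cexp (s * I) ^ (j + 1)).re : ℝ) := by
  set e := cexp (s * I)
  have hconj : conj e = e⁻¹ := by rw [← exp_conj, ← exp_neg]; simp
  have hterm (j : ℕ) (hj : j ∈ range m) :
      W j * e ^ (m + (j + 1)) + conj (W j) * e ^ (m - (j + 1)) =
        2 * e ^ m * ((W j * e ^ (j + 1)).re : ℂ) := by
    rw [re_eq_add_conj, map_mul, map_pow, hconj,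
      pow_sub₀ _ (exp_ne_zero _) (by simp at hj; omega), inv_pow]
    ring
  simp only [trigNumerator, eval_add, eval_mul, eval_C, eval_pow, eval_X, eval_finsetSum]
  rw [sum_congr rfl hterm, ← mul_sum]
  push_cast
  ring

lemma coeff_trigNumerator_self : (trigNumerator a W m).coeff m = 2 * a := by
  simp only [trigNumerator, coeff_add, coeff_C_mul_X_pow, finsetSum_coeff]
  rw [sum_eq_zero fun j hj => by
    simp at hj; rw [if_neg (by omega), if_neg (by omega), add_zero], add_zero, if_true]

lemma coeff_trigNumerator_add {j : ℕ} (hj : j < m) :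
    (trigNumerator a W m).coeff (m + (j + 1)) = W j := by
  simp only [trigNumerator, coeff_add, coeff_C_mul_X_pow, finsetSum_coeff]
  rw [if_neg (by omega), sum_eq_single j (fun i hi _ => by
      simp at hi; rw [if_neg (by omega), if_neg (by omega), add_zero]) (by simp [hj]),
    if_pos rfl, if_neg (by omega), zero_add, add_zero]

lemma countable_setOf_trigPoly_eq_zero (h : a ≠ 0 ∨ ∃ j < m, W j ≠ 0) :
    {s : ℝ | a + ∑ j ∈ range m, (W j * cexp (s * I) ^ (j + 1)).re = 0}.Countable := by
  have hQ : trigNumerator a W m ≠ 0 := by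
    intro hQ
    rcases h with ha | ⟨j, hj, hW⟩
    · simpa [ha] using (coeff_trigNumerator_self a W m).symm.trans (congrArg (coeff · m) hQ)
    · exact hW ((coeff_trigNumerator_add a W m hj).symm.trans (congrArg (coeff · _) hQ))
  refine (countable_setOf_eval_cexp_mul_I_eq_zero hQ).mono fun s hs => ?_
  simp only [mem_ofPred_eq] at hs ⊢
  rw [eval_cexp_mul_I_trigNumerator, hs]
  simp

end TrigNumerator

namespace PlaneRotation

def pair (f : ℕ → ℝ) (j : ℕ) : ℂ := ⟨f (2 * j), f (2 * j + 1)⟩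

lemma pair_div_two_ne_zero {f : ℕ → ℝ} {i : ℕ} (hi : f i ≠ 0) : pair f (i / 2) ≠ 0 := by
  intro h
  rcases Nat.even_or_odd' i with ⟨j, rfl | rfl⟩
  · exact hi (by simpa [pair] using congrArg re h)
  · exact hi (by simpa [pair, Nat.add_div] using congrArg im h)

lemma sum_mul_eq_sum_pair (N : ℕ) (f g : ℕ → ℝ) :
    ∑ i ∈ range N, f i * g i = ∑ j ∈ range (N / 2), (pair f j * conj (pair g j)).re
      + ∑ i ∈ Ico (2 * (N / 2)) N, f i * g i := by
  rw [range_eq_Ico, ← sum_Ico_consecutive _ (Nat.zero_le _) (Nat.mul_div_le N 2), ← range_eq_Ico]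
  congr 1
  induction N / 2 with
  | zero => simp
  | succ m ih =>
    rw [mul_add_one, sum_range_succ, sum_range_succ, sum_range_succ, ih]
    simp [pair, add_assoc]

/-- Rotation of the plane of coordinates `(2j, 2j+1)`, viewed as `ℂ` through `pair`, by the angle
`(j + 1) s`, for each `j < N / 2`; the last coordinate of an odd-length vector is fixed. -/
def rotateCoords (N : ℕ) (s : ℝ) (f : ℕ → ℝ) (i : ℕ) : ℝ :=
  if i < 2 * (N / 2) then
    let z := cexp (s * I) ^ (i / 2 + 1) * pair f (i / 2)
    if i % 2 = 0 then z.re else z.im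
  else f i

variable {N : ℕ}

lemma pair_rotateCoords {s : ℝ} {f : ℕ → ℝ} {j : ℕ} (hj : j < N / 2) :
    pair (rotateCoords N s f) j = cexp (s * I) ^ (j + 1) * pair f j := by
  apply Complex.ext <;> simp [pair, rotateCoords, show 2 * j < 2 * (N / 2) by omega,
    show 2 * j + 1 < 2 * (N / 2) by omega, Nat.add_mod, Nat.add_div]

lemma rotateCoords_of_le {s : ℝ} {f : ℕ → ℝ} {i : ℕ} (hi : 2 * (N / 2) ≤ i) :
    rotateCoords N s f i = f i := by
  simp [rotateCoords, hi.not_gt]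

lemma sum_rotateCoords_mul (s : ℝ) (f g : ℕ → ℝ) :
    ∑ i ∈ range N, rotateCoords N s f i * g i
      = ∑ i ∈ Ico (2 * (N / 2)) N, f i * g i
        + ∑ j ∈ range (N / 2), (pair f j * conj (pair g j) * cexp (s * I) ^ (j + 1)).re := by
  rw [sum_mul_eq_sum_pair, add_comm]
  congr 1
  · exact sum_congr rfl fun i hi => by rw [rotateCoords_of_le (mem_Ico.1 hi).1]
  · exact sum_congr rfl fun j hj => by rw [pair_rotateCoords (mem_range.1 hj)]; ring_nf

lemma sum_rotateCoords_mul_rotateCoords (s : ℝ) (f g : ℕ → ℝ) :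
    ∑ i ∈ range N, rotateCoords N s f i * rotateCoords N s g i = ∑ i ∈ range N, f i * g i := by
  have hunit : cexp (s * I) * conj (cexp (s * I)) = 1 := by
    rw [← exp_conj, ← exp_add]; simp
  rw [sum_mul_eq_sum_pair, sum_mul_eq_sum_pair]
  congr 1
  · refine sum_congr rfl fun j hj => ?_
    rw [pair_rotateCoords (mem_range.1 hj), pair_rotateCoords (mem_range.1 hj), map_mul, map_pow,
      mul_mul_mul_comm, ← mul_pow, hunit, one_pow, one_mul]
  · exact sum_congr rfl fun i hi => by
      rw [rotateCoords_of_le (mem_Ico.1 hi).1, rotateCoords_of_le (mem_Ico.1 hi).1]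

def coords (x : EuclideanSpace ℝ (Fin N)) (i : ℕ) : ℝ :=
  if h : i < N then x ⟨i, h⟩ else 0

lemma coords_of_le {x : EuclideanSpace ℝ (Fin N)} {i : ℕ} (hi : N ≤ i) : coords x i = 0 := by
  simp [coords, hi.not_gt]

lemma exists_coords_ne_zero {x : EuclideanSpace ℝ (Fin N)} (hx : x ≠ 0) :
    ∃ i < N, coords x i ≠ 0 := by
  contrapose! hx
  ext i
  simpa [coords] using hx i i.isLt

lemma inner_eq_sum_coords (x y : EuclideanSpace ℝ (Fin N)) :
    inner ℝ x y = ∑ i ∈ range N, coords x i * coords y i := by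
  rw [← Fin.sum_univ_eq_sum_range (fun i => coords x i * coords y i)]
  simp [coords, PiLp.inner_apply, mul_comm]

def rotate (s : ℝ) (x : EuclideanSpace ℝ (Fin N)) : EuclideanSpace ℝ (Fin N) :=
  WithLp.toLp 2 fun i => rotateCoords N s (coords x) i

lemma coords_rotate (s : ℝ) (x : EuclideanSpace ℝ (Fin N)) :
    coords (rotate s x) = rotateCoords N s (coords x) := by
  funext i
  by_cases hi : i < N
  · simp [coords, rotate, hi]
  · rw [coords_of_le (not_lt.1 hi), rotateCoords_of_le (by omega), coords_of_le (not_lt.1 hi)]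

lemma inner_rotate_rotate (s : ℝ) (x y : EuclideanSpace ℝ (Fin N)) :
    inner ℝ (rotate s x) (rotate s y) = inner ℝ x y := by
  rw [inner_eq_sum_coords, inner_eq_sum_coords, coords_rotate, coords_rotate,
    sum_rotateCoords_mul_rotateCoords]

lemma continuous_rotate (x : EuclideanSpace ℝ (Fin N)) : Continuous fun s => rotate s x := by
  refine (PiLp.continuous_toLp 2 _).comp (continuous_pi fun i => ?_)
  unfold rotateCoords
  split_ifs <;> fun_prop

def rotatedBasis (u : OrthonormalBasis (Fin N) ℝ (EuclideanSpace ℝ (Fin N))) (s : ℝ) :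
    OrthonormalBasis (Fin N) ℝ (EuclideanSpace ℝ (Fin N)) :=
  have hon : Orthonormal ℝ fun k => rotate s (u k) := by
    simpa [orthonormal_iff_ite, inner_rotate_rotate] using u.orthonormal
  OrthonormalBasis.mk hon (hon.linearIndependent.span_eq_top_of_card_eq_finrank' (by simp)).ge

lemma rotatedBasis_apply (u : OrthonormalBasis (Fin N) ℝ (EuclideanSpace ℝ (Fin N))) (s : ℝ)
    (k : Fin N) : rotatedBasis u s k = rotate s (u k) := by
  simp [rotatedBasis]

variable (N) in
def reflectedBasis : OrthonormalBasis (Fin N) ℝ (EuclideanSpace ℝ (Fin N)) :=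
  (EuclideanSpace.basisFun (Fin N) ℝ).map (Submodule.reflection (ℝ ∙ WithLp.toLp 2 fun _ => 1))

lemma coords_reflectedBasis {k : Fin N} {i : ℕ} (hi : i < N) :
    coords (reflectedBasis N k) i = 2 / N - if i = k then 1 else 0 := by
  simp [coords, hi, reflectedBasis, Submodule.reflection_singleton_apply, EuclideanSpace.norm_eq,
    PiLp.inner_apply, div_eq_mul_inv]
  simp [Fin.ext_iff]

lemma pair_reflectedBasis_ne_zero (k : Fin N) {j : ℕ} (hj : j < N / 2) :
    pair (coords (reflectedBasis N k)) j ≠ 0 := by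
  have hN : (N : ℝ) ≠ 0 := by norm_cast; omega
  intro h
  have h0 := congrArg re h
  have h1 := congrArg im h
  simp only [pair, zero_re, zero_im, coords_reflectedBasis (show 2 * j < N by omega),
    coords_reflectedBasis (show 2 * j + 1 < N by omega)] at h0 h1
  split_ifs at h0 h1 <;> simp_all

lemma coords_reflectedBasis_ne_zero (hN : N ≠ 2) (k : Fin N) {i : ℕ} (hi : i < N) :
    coords (reflectedBasis N k) i ≠ 0 := by
  have hN' : (N : ℝ) ≠ 0 := by norm_cast; omega
  rw [coords_reflectedBasis hi, sub_ne_zero]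
  split_ifs
  · rw [Ne, div_eq_one_iff_eq hN']; exact_mod_cast hN.symm
  · simp [hN']

lemma countable_setOf_inner_rotatedBasis_eq_zero (k : Fin N) {x : EuclideanSpace ℝ (Fin N)}
    (hx : x ≠ 0) : {s : ℝ | inner ℝ (rotatedBasis (reflectedBasis N) s k) x = 0}.Countable := by
  set u := coords (reflectedBasis N k)
  have hinner (s : ℝ) : inner ℝ (rotatedBasis (reflectedBasis N) s k) x =
      ∑ i ∈ Ico (2 * (N / 2)) N, u i * coords x i +
        ∑ j ∈ range (N / 2), (pair u j * conj (pair (coords x) j) * cexp (s * I) ^ (j + 1)).re := by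
    rw [rotatedBasis_apply, inner_eq_sum_coords, coords_rotate, sum_rotateCoords_mul]
  simp_rw [hinner]
  apply countable_setOf_trigPoly_eq_zero
  obtain ⟨i, hiN, hxi⟩ := exists_coords_ne_zero hx
  by_cases hi : i < 2 * (N / 2)
  · exact .inr ⟨i / 2, by omega, mul_ne_zero (pair_reflectedBasis_ne_zero k (by omega))
      ((_root_.map_ne_zero _).2 (pair_div_two_ne_zero hxi))⟩
  · left
    rw [show Finset.Ico (2 * (N / 2)) N = {i} by ext; simp; omega, sum_singleton]
    exact mul_ne_zero (coords_reflectedBasis_ne_zero (by omega) k hiN) hxi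

end PlaneRotation

open PlaneRotation in
theorem exists_orthonormalBasis_measure_inner_eq_zero {N : ℕ}
    (ν : Measure (EuclideanSpace ℝ (Fin N))) [SFinite ν] (h0 : ν {0} = 0) :
    ∃ b : OrthonormalBasis (Fin N) ℝ (EuclideanSpace ℝ (Fin N)),
      ∀ k, ν {x | inner ℝ (b k) x = 0} = 0 := by
  set b := rotatedBasis (reflectedBasis N)
  have hgood : ∀ᵐ x ∂ν, ∀ᵐ s, ∀ k, inner ℝ (b s k) x ≠ 0 := by
    filter_upwards [measure_eq_zero_iff_ae_notMem.1 h0] with x hx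
    refine ae_all_iff.2 fun k => measure_eq_zero_iff_ae_notMem.1 ?_
    exact (countable_setOf_inner_rotatedBasis_eq_zero k hx).measure_zero volume
  have hmeas :
      MeasurableSet {p : EuclideanSpace ℝ (Fin N) × ℝ | ∀ k, inner ℝ (b p.2 k) p.1 ≠ 0} := by
    simp only [ofPred_forall]
    refine MeasurableSet.iInter fun k => (isOpen_ne_fun ?_ continuous_const).measurableSet
    simp only [b, rotatedBasis_apply]
    exact ((continuous_rotate _).comp continuous_snd).inner continuous_fst
  obtain ⟨s, hs⟩ := ((Measure.ae_ae_comm hmeas).1 hgood).exists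
  exact ⟨b s, fun k => measure_eq_zero_iff_ae_notMem.2 (ae_all_iff.1 hs k)⟩

instance : IsFiniteMeasure μ01 := by
  unfold μ01
  infer_instance

theorem orthogonal_hyperplanes_of_null_zero_set_general (N : ℕ)
    (q : ℝ → EuclideanSpace ℝ (Fin N)) (hq : MemLp q 2 μ01)
    (h0 : volume {t ∈ Set.Icc (0:ℝ) 1 | q t = 0} = 0) :
    ∃ b : OrthonormalBasis (Fin N) ℝ (EuclideanSpace ℝ (Fin N)),
      ∀ k : Fin N,
        volume {t ∈ Set.Icc (0:ℝ) 1 | (inner ℝ (b k) (q t) : ℝ) = 0} = 0 := by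
  have hmap {S : Set (EuclideanSpace ℝ (Fin N))} (hS : MeasurableSet S) :
      volume {t ∈ Set.Icc (0:ℝ) 1 | q t ∈ S} = μ01.map q S := by
    rw [Measure.map_apply_of_aemeasurable hq.aestronglyMeasurable.aemeasurable hS, μ01,
      Measure.restrict_apply' measurableSet_Icc, inter_comm]
    rfl
  obtain ⟨b, hb⟩ := exists_orthonormalBasis_measure_inner_eq_zero (μ01.map q)
    ((hmap (measurableSet_singleton 0)).symm.trans h0)
  refine ⟨b, fun k => (hmap ?_).trans (hb k)⟩
  exact (isClosed_eq (continuous_const.inner continuous_id) continuous_const).measurableSet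

/-- if `q ∈ L²(I,ℝᴺ)` and `q⁻¹(0)` has measure zero, then there
are `N` pairwise orthogonal hyperplanes `H_k = u_k^⊥` (with `u₁, …, u_N` an
orthonormal basis of `ℝᴺ`) such that each `q⁻¹(H_k)` has measure zero. -/
theorem orthogonal_hyperplanes_of_null_zero_set (N : ℕ) (hN : 1 ≤ N)
    (q : ℝ → EuclideanSpace ℝ (Fin N)) (hq : MemLp q 2 μ01)
    (h0 : volume {t ∈ Set.Icc (0:ℝ) 1 | q t = 0} = 0) :
    ∃ b : OrthonormalBasis (Fin N) ℝ (EuclideanSpace ℝ (Fin N)),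
      ∀ k : Fin N,
        volume {t ∈ Set.Icc (0:ℝ) 1 | (inner ℝ (b k) (q t) : ℝ) = 0} = 0 :=
  orthogonal_hyperplanes_of_null_zero_set_general N q hq h0

end
end

section
/- Let q ∈ L²(I,ℝᴺ), written componentwise q(t) = (q₁(t), …, q_N(t)), and assume q⁻¹(0) has Lebesgue measure 0. Then there exists an orthogonal matrix A ∈ O(N,ℝ) such that, writing q̃(t) = A q(t) with components q̃₁, …, q̃_N, each set q̃_k⁻¹(0) has Lebesgue measure 0 for k = 1, …, N. -/
/-!
For real functions `f` and `g`, the sets `{f + c g = 0, g ≠ 0}` are level sets of `-f / g`, hence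
disjoint for distinct `c`, and an s-finite measure charges only countably many of them. So for all
but countably many slopes `c`, the plane rotation of slope `c` turns `(f, g)` into two functions
each vanishing a.e. only where both `f` and `g` do.

In dimension at least two, pick coordinates `i ≠ j`. By induction, rotate the coordinates other
than `j` so that each of them vanishes only where all of them do; then mix coordinates `i` and `j`
by a generic plane rotation, after which both vanish only where the whole vector does; finally
rotate the coordinates other than `i` by induction, so that each of them vanishes only where the
new `j`-th coordinate does.
-/

open MeasureTheory Set

noncomputable section

open Matrix

namespace Matrix

variable {ι κ ν R : Type*} [Fintype ι] [DecidableEq ι] [Fintype κ] [DecidableEq κ]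
  [Fintype ν] [DecidableEq ν] [CommRing R]

theorem submatrix_equiv_mem_orthogonalGroup {A : Matrix κ κ R} (hA : A ∈ orthogonalGroup κ R)
    (e : ι ≃ κ) : A.submatrix e e ∈ orthogonalGroup ι R := by
  rw [mem_orthogonalGroup_iff] at hA ⊢
  rw [transpose_submatrix, submatrix_mul_equiv, hA, submatrix_one_equiv]

theorem fromBlocks_mem_orthogonalGroup {A : Matrix κ κ R} {D : Matrix ν ν R}
    (hA : A ∈ orthogonalGroup κ R) (hD : D ∈ orthogonalGroup ν R) :
    fromBlocks A 0 0 D ∈ orthogonalGroup (κ ⊕ ν) R := by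
  rw [mem_orthogonalGroup_iff] at hA hD ⊢
  simp [fromBlocks_transpose, fromBlocks_multiply, hA, hD]

theorem rotation_mem_orthogonalGroup {a b : R} (hab : a ^ 2 + b ^ 2 = 1) :
    !![a, b; -b, a] ∈ orthogonalGroup (Fin 2) R := by
  rw [mem_orthogonalGroup_iff, one_fin_two, eta_fin_two (_ * _)]
  simp [mul_apply, ← sq, hab, mul_comm a b, add_comm (b ^ 2)]

end Matrix

variable {α : Type*} [MeasurableSpace α] {μ : Measure α}

theorem exists_ae_eq_zero_of_add_mul_eq_zero [SFinite μ] {f g : α → ℝ}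
    (hf : Measurable f) (hg : Measurable g) :
    ∃ c : ℝ, (∀ᵐ t ∂μ, f t + c * g t = 0 → f t = 0 ∧ g t = 0) ∧
      (∀ᵐ t ∂μ, g t - c * f t = 0 → f t = 0 ∧ g t = 0) := by
  have hS := Measure.countable_meas_level_set_pos (μ := μ) (g := fun t => -f t / g t)
    (hf.neg.div hg)
  have hT := Measure.countable_meas_level_set_pos (μ := μ) (g := fun t => g t / f t) (hg.div hf)
  obtain ⟨c, hc⟩ :=
    nonempty_compl.2 fun h : _ ∪ _ = univ => not_countable_univ (h ▸ hS.union hT)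
  simp only [mem_compl_iff, mem_union, mem_ofPred_eq, not_or, not_lt, nonpos_iff_eq_zero] at hc
  refine ⟨c, ?_, ?_⟩
  · filter_upwards [measure_eq_zero_iff_ae_notMem.1 hc.1] with t ht h0
    by_cases hg0 : g t = 0
    · simp_all
    · exact absurd (by field_simp; linarith) ht
  · filter_upwards [measure_eq_zero_iff_ae_notMem.1 hc.2] with t ht h0
    by_cases hf0 : f t = 0
    · simp_all
    · exact absurd (by field_simp; linarith) ht

variable (μ) in
def AdmitsGenericRotations (ι : Type*) [Fintype ι] [DecidableEq ι] : Prop :=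
  ∀ r : α → ι → ℝ, Measurable r →
    ∃ A ∈ orthogonalGroup ι ℝ, ∀ k, ∀ᵐ t ∂μ, (A *ᵥ r t) k = 0 → r t = 0

theorem Measurable.const_mulVec {ι κ : Type*} [Finite ι] [Fintype κ] {r : α → κ → ℝ}
    (hr : Measurable r) (A : Matrix ι κ ℝ) : Measurable fun t => A *ᵥ r t :=
  (continuous_const.matrix_mulVec continuous_id).measurable.comp hr

variable {ι κ : Type*} [Fintype ι] [DecidableEq ι] [Fintype κ] [DecidableEq κ]

theorem admitsGenericRotations_fin_two [SFinite μ] : AdmitsGenericRotations μ (Fin 2) := by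
  intro r hr
  obtain ⟨c, h₀, h₁⟩ := exists_ae_eq_zero_of_add_mul_eq_zero (μ := μ)
    (f := fun t => r t 0) (g := fun t => r t 1) (by fun_prop) (by fun_prop)
  set a := (√(1 + c ^ 2))⁻¹
  have ha : a ≠ 0 := by positivity
  have hab : a ^ 2 + (c * a) ^ 2 = 1 := by
    rw [mul_pow, ← one_add_mul, inv_pow, Real.sq_sqrt (by positivity),
      mul_inv_cancel₀ (by positivity)]
  refine ⟨!![a, c * a; -(c * a), a], rotation_mem_orthogonalGroup hab, ?_⟩
  have hA : ∀ v : Fin 2 → ℝ,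
      !![a, c * a; -(c * a), a] *ᵥ v = a • ![v 0 + c * v 1, v 1 - c * v 0] := by
    intro v
    ext i
    fin_cases i <;> simp [mulVec, dotProduct, Fin.sum_univ_two] <;> ring
  have hr0 : ∀ t, r t 0 = 0 ∧ r t 1 = 0 → r t = 0 :=
    fun t h => funext (Fin.forall_fin_two.2 h)
  refine Fin.forall_fin_two.2 ⟨?_, ?_⟩
  · filter_upwards [h₀] with t ht h
    exact hr0 t (ht (by simpa [hA, ha] using h))
  · filter_upwards [h₁] with t ht h
    exact hr0 t (ht (by simpa [hA, ha] using h))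

theorem AdmitsGenericRotations.of_equiv (e : ι ≃ κ) (h : AdmitsGenericRotations μ κ) :
    AdmitsGenericRotations μ ι := by
  intro r hr
  obtain ⟨A, hA, hAr⟩ := h (fun t => r t ∘ e.symm) (by fun_prop)
  refine ⟨A.submatrix e e, submatrix_equiv_mem_orthogonalGroup hA e, fun k => ?_⟩
  filter_upwards [hAr (e k)] with t ht h
  rw [submatrix_mulVec_equiv] at h
  funext l
  simpa using congrFun (ht h) (e l)

theorem AdmitsGenericRotations.exists_subtype {p : ι → Prop} [DecidablePred p]
    (h : AdmitsGenericRotations μ {x // p x}) {r : α → ι → ℝ} (hr : Measurable r) :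
    ∃ A ∈ orthogonalGroup ι ℝ,
      (∀ k, p k → ∀ᵐ t ∂μ, (A *ᵥ r t) k = 0 → ∀ l, p l → r t l = 0) ∧
      ∀ t k, ¬ p k → (A *ᵥ r t) k = r t k := by
  obtain ⟨B, hB, hBr⟩ := h (fun t x => r t x) (by fun_prop)
  set e := (Equiv.sumCompl p).symm
  refine ⟨(fromBlocks B 0 0 1).submatrix e e,
    submatrix_equiv_mem_orthogonalGroup (fromBlocks_mem_orthogonalGroup hB (one_mem _)) e,
    fun k hk => ?_, fun t k hk => ?_⟩
  · filter_upwards [hBr ⟨k, hk⟩] with t ht h l hl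
    simp only [e, submatrix_mulVec_equiv, Equiv.symm_symm, fromBlocks_mulVec, zero_mulVec, add_zero,
      Function.comp_apply, Equiv.sumCompl_symm_apply_of_pos hk, Sum.elim_inl] at h
    exact congrFun (ht h) ⟨l, hl⟩
  · simp [e, submatrix_mulVec_equiv, fromBlocks_mulVec, Equiv.sumCompl_symm_apply_of_neg hk]

theorem admitsGenericRotations_of_card_eq_two [SFinite μ] (h : Fintype.card ι = 2) :
    AdmitsGenericRotations μ ι :=
  admitsGenericRotations_fin_two.of_equiv (Fintype.equivFinOfCardEq h)

theorem admitsGenericRotations_of_ne [SFinite μ] {i j : ι} (hij : i ≠ j)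
    (hj : AdmitsGenericRotations μ {x // x ≠ j})
    (hi : AdmitsGenericRotations μ {x // x ≠ i}) :
    AdmitsGenericRotations μ ι := by
  intro r hr
  have hpair : AdmitsGenericRotations μ {x // x = i ∨ x = j} :=
    admitsGenericRotations_of_card_eq_two (by
      simp [Fintype.card_subtype, Finset.filter_or, Finset.filter_eq', Finset.card_pair hij])
  obtain ⟨A₁, hA₁, hzero₁, hfix₁⟩ := hj.exists_subtype hr
  obtain ⟨A₂, hA₂, hzero₂, -⟩ := hpair.exists_subtype (hr.const_mulVec A₁)
  obtain ⟨A₃, hA₃, hzero₃, hfix₃⟩ :=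
    hi.exists_subtype ((hr.const_mulVec A₁).const_mulVec A₂)
  refine ⟨A₃ * A₂ * A₁, mul_mem (mul_mem hA₃ hA₂) hA₁, fun k => ?_⟩
  simp only [← mulVec_mulVec]
  have h₁ : ∀ᵐ t ∂μ, (A₁ *ᵥ r t) i = 0 → (A₁ *ᵥ r t) j = 0 → r t = 0 := by
    filter_upwards [hzero₁ i hij] with t ht hi hj
    funext l
    by_cases hl : l = j
    · rwa [hl, ← hfix₁ t j (not_not.2 rfl)]
    · exact ht hi l hl
  have h₂ : ∀ k, k = i ∨ k = j →
      ∀ᵐ t ∂μ, (A₂ *ᵥ A₁ *ᵥ r t) k = 0 → r t = 0 := by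
    intro k hk
    filter_upwards [hzero₂ k hk, h₁] with t ht ht' h
    exact ht' (ht h i (.inl rfl)) (ht h j (.inr rfl))
  rcases eq_or_ne k i with rfl | hk
  · filter_upwards [h₂ k (.inl rfl)] with t ht h
    rw [hfix₃ t k (not_not.2 rfl)] at h
    exact ht h
  · filter_upwards [hzero₃ k hk, h₂ j (.inr rfl)] with t ht ht' h
    exact ht' (ht h j hij.symm)

variable (μ) in
theorem admitsGenericRotations [SFinite μ] (ι : Type*) [Fintype ι] [DecidableEq ι] :
    AdmitsGenericRotations μ ι := by
  revert ‹Fintype ι› ‹DecidableEq ι›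
  refine Finite.induction_subsingleton_or_nontrivial
    (P := fun ι => ∀ [Fintype ι] [DecidableEq ι], AdmitsGenericRotations μ ι) ι ?_ ?_
  · intro ι _ _ _ _ r _
    refine ⟨1, one_mem _, fun k => .of_forall fun t h => funext fun l => ?_⟩
    rwa [Subsingleton.elim l k, ← one_mulVec (r t)]
  · intro ι _ _ IH _ _
    obtain ⟨i, j, hij⟩ := exists_pair_ne ι
    exact admitsGenericRotations_of_ne hij (IH _ (Finite.card_subtype_lt (not_not.2 rfl)))
      (IH _ (Finite.card_subtype_lt (not_not.2 rfl)))

theorem rotate_to_nonvanishing_components_general (N : ℕ)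
    (q : ℝ → (Fin N → ℝ)) (hq : MemLp q 2 μ01)
    (h0 : volume {t ∈ Set.Icc (0:ℝ) 1 | q t = 0} = 0) :
    ∃ A : Matrix.orthogonalGroup (Fin N) ℝ,
      ∀ k : Fin N,
        volume {t ∈ Set.Icc (0:ℝ) 1 |
          (A : Matrix (Fin N) (Fin N) ℝ).mulVec (q t) k = 0} = 0 := by
  have hqm := hq.aestronglyMeasurable.aemeasurable
  obtain ⟨A, hA, hAq⟩ :=
    admitsGenericRotations (volume.restrict (Icc (0 : ℝ) 1)) (Fin N) _ hqm.measurable_mk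
  refine ⟨⟨A, hA⟩, fun k => measure_mono_null_ae ?_ h0⟩
  have hk : ∀ᵐ t, t ∈ Icc (0 : ℝ) 1 → (A *ᵥ q t) k = 0 → q t = 0 := by
    rw [← ae_restrict_iff' measurableSet_Icc]
    filter_upwards [hAq k, hqm.ae_eq_mk] with t ht hqt
    rwa [hqt]
  filter_upwards [hk] with t ht ⟨hI, hz⟩ using ⟨hI, ht hI hz⟩

/-- if `q ∈ L²(I,ℝᴺ)` (written componentwise) and `q⁻¹(0)` has
measure zero, then there is an orthogonal matrix `A ∈ O(N,ℝ)` such that each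
component of `q̃ = A q` vanishes only on a set of measure zero. -/
theorem rotate_to_nonvanishing_components (N : ℕ) (hN : 1 ≤ N)
    (q : ℝ → (Fin N → ℝ)) (hq : MemLp q 2 μ01)
    (h0 : volume {t ∈ Set.Icc (0:ℝ) 1 | q t = 0} = 0) :
    ∃ A : Matrix.orthogonalGroup (Fin N) ℝ,
      ∀ k : Fin N,
        volume {t ∈ Set.Icc (0:ℝ) 1 |
          (A : Matrix (Fin N) (Fin N) ℝ).mulVec (q t) k = 0} = 0 :=
  rotate_to_nonvanishing_components_general N q hq h0

end
end

section
/- Let q ∈ L²(I,ℝ) satisfy μ(q⁻¹(0)) = 0, where μ is Lebesgue measure. Let (τ_k) be a sequence in Γ̃ and τ ∈ Γ̃. If q*τ_k → q*τ in the L² norm as k → ∞, then for every t ∈ I, τ_k(t) → τ(t). -/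
open MeasureTheory Set Filter

noncomputable section

variable {E : Type*} [NormedAddCommGroup E] [InnerProductSpace ℝ E]

/-!
Changing variables `u = γ s` (the map `γ` pushes the measure `γ' ds` on `(0, t]` forward to
Lebesgue measure on `(0, γ t]`) shows that the `L²(0, t)` norm of `q * γ` is the `L²(0, γ t)` norm
of `q`. Restricting to `(0, t]` does not increase `L²` distances, so `q * τ_k → q * τ` forces
`‖q‖_{L²(0, τ_k t)} → ‖q‖_{L²(0, τ t)}`; as `q` vanishes only on a null set, `x ↦ ‖q‖_{L²(0, x)}`
is strictly increasing on `I`, hence `τ_k t → τ t`.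
-/

open scoped ENNReal

theorem StrictMonoOn.tendsto_of_tendsto_comp {α β ι : Type*} [LinearOrder α] [TopologicalSpace α]
    [OrderTopology α] [LinearOrder β] [TopologicalSpace β] [OrderTopology β] {s : Set α}
    (hs : s.OrdConnected) {F : α → β} (hF : StrictMonoOn F s) {l : Filter ι} {x : ι → α} {a : α}
    (hx : ∀ i, x i ∈ s) (ha : a ∈ s) (h : Tendsto (fun i => F (x i)) l (nhds (F a))) :
    Tendsto x l (nhds a) := by
  refine tendsto_order.2 ⟨fun a' ha' => ?_, fun a' ha' => ?_⟩
  · by_cases hbelow : ∃ c ∈ s, c ≤ a'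
    · obtain ⟨c, hc, hca⟩ := hbelow
      have ha's : a' ∈ s := hs.out hc ha ⟨hca, ha'.le⟩
      filter_upwards [(tendsto_order.1 h).1 _ (hF ha's ha ha')] with i hi
      exact (hF.lt_iff_lt ha's (hx i)).1 hi
    · push Not at hbelow
      exact Eventually.of_forall fun i => hbelow _ (hx i)
  · by_cases habove : ∃ c ∈ s, a' ≤ c
    · obtain ⟨c, hc, hac⟩ := habove
      have ha's : a' ∈ s := hs.out ha hc ⟨ha'.le, hac⟩
      filter_upwards [(tendsto_order.1 h).2 _ (hF ha ha's ha')] with i hi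
      exact (hF.lt_iff_lt (hx i) ha's).1 hi
    · push Not at habove
      exact Eventually.of_forall fun i => habove _ (hx i)

theorem Monotone.exists_preimage_Iic_inter_Ioc {g : ℝ → ℝ} (hg : Monotone g) {a t : ℝ}
    (hgc : ContinuousOn g (Icc a t)) (hat : a ≤ t) (b : ℝ) :
    ∃ c ∈ Icc a t, g ⁻¹' Iic b ∩ Ioc a t = Ioc a c ∧
      Iic b ∩ Ioc (g a) (g t) = Ioc (g a) (g c) := by
  rcases lt_or_ge b (g a) with hb | hb
  · refine ⟨a, left_mem_Icc.2 hat, ?_, ?_⟩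
    · rw [Ioc_self, eq_empty_iff_forall_notMem]
      exact fun s ⟨hsb, hs⟩ => (hb.trans_le (hg hs.1.le)).not_ge hsb
    · rw [Ioc_self, eq_empty_iff_forall_notMem]
      exact fun u ⟨hub, hu⟩ => (hb.trans hu.1).not_ge hub
  have hcompact : IsCompact (Icc a t ∩ g ⁻¹' Iic b) :=
    isCompact_Icc.of_isClosed_subset (hgc.preimage_isClosed_of_isClosed isClosed_Icc isClosed_Iic)
      inter_subset_left
  obtain ⟨c, ⟨hc, hcb⟩, hmax⟩ :=
    hcompact.exists_isGreatest ⟨a, left_mem_Icc.2 hat, hb⟩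
  have hgc_eq : g c = min (g t) b := by
    rcases le_total (g t) b with htb | hbt
    · have : c = t := le_antisymm hc.2 (hmax ⟨right_mem_Icc.2 hat, htb⟩)
      rw [this, min_eq_left htb]
    · obtain ⟨s, hs, hsb⟩ := intermediate_value_Icc hat hgc ⟨hb, hbt⟩
      rw [min_eq_right hbt]
      exact le_antisymm hcb (hsb ▸ hg (hmax ⟨hs, hsb.le⟩))
  refine ⟨c, hc, ?_, ?_⟩
  · ext s
    exact ⟨fun ⟨hsb, hs⟩ => ⟨hs.1, hmax ⟨Ioc_subset_Icc_self hs, hsb⟩⟩,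
      fun hs => ⟨(hg hs.2).trans hcb, hs.1, hs.2.trans hc.2⟩⟩
  · rw [inter_comm, Ioc_inter_Iic, hgc_eq]

theorem Monotone.map_eq_volume_restrict_Ioc {g : ℝ → ℝ} (hg : Monotone g) {a t : ℝ}
    (hgc : ContinuousOn g (Icc a t)) (hat : a ≤ t) {ν : Measure ℝ} (hν : ∀ᵐ x ∂ν, x ∈ Ioc a t)
    (hνg : ∀ c ∈ Icc a t, ν (Ioc a c) = ENNReal.ofReal (g c - g a)) :
    ν.map g = volume.restrict (Ioc (g a) (g t)) := by
  have hrestrict : ν.restrict (Ioc a t) = ν := Measure.restrict_eq_self_of_ae_mem hν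
  have : IsFiniteMeasure ν := by
    rw [← hrestrict, isFiniteMeasure_restrict, hνg t (right_mem_Icc.2 hat)]
    exact ENNReal.ofReal_ne_top
  refine Measure.ext_of_Iic _ _ fun b => ?_
  obtain ⟨c, hc, hpre, himg⟩ := hg.exists_preimage_Iic_inter_Ioc hgc hat b
  rw [Measure.map_apply hg.measurable measurableSet_Iic, ← hrestrict,
    Measure.restrict_apply (hg.measurable measurableSet_Iic), hpre, hνg c hc,
    Measure.restrict_apply measurableSet_Iic, himg, Real.volume_Ioc]

theorem tendsto_eLpNorm_of_tendsto_eLpNorm_sub {α F ι : Type*} [MeasurableSpace α]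
    [NormedAddCommGroup F] {μ : Measure α} {p : ℝ≥0∞} [Fact (1 ≤ p)] {l : Filter ι}
    {f : ι → α → F} {g : α → F} (hf : ∀ i, MemLp (f i) p μ) (hg : MemLp g p μ)
    (h : Tendsto (fun i => eLpNorm (f i - g) p μ) l (nhds 0)) :
    Tendsto (fun i => eLpNorm (f i) p μ) l (nhds (eLpNorm g p μ)) := by
  have := (continuous_enorm.tendsto _).comp ((Lp.tendsto_Lp_iff_tendsto_eLpNorm'' f hf g hg).2 h)
  simpa only [Function.comp_def, Lp.enorm_toLp] using this

theorem strictMonoOn_eLpNorm_restrict_Ioc {F : Type*} [NormedAddCommGroup F] {q : ℝ → F}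
    {p : ℝ≥0∞} {a b : ℝ} (hp0 : p ≠ 0) (hp : p ≠ ∞) (hq : MemLp q p (volume.restrict (Ioc a b)))
    (hq0 : ∀ᵐ u ∂volume.restrict (Ioc a b), q u ≠ 0) :
    StrictMonoOn (fun x => eLpNorm q p (volume.restrict (Ioc a x))) (Icc a b) := by
  intro x hx y hy hxy
  have hr : 0 < p.toReal := ENNReal.toReal_pos hp0 hp
  have hsub : ∀ {c d}, a ≤ c → d ≤ b → volume.restrict (Ioc c d) ≤ volume.restrict (Ioc a b) :=
    fun hc hd => Measure.restrict_mono (Ioc_subset_Ioc hc hd) le_rfl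
  simp only [eLpNorm_eq_lintegral_rpow_enorm_toReal hp0 hp]
  refine ENNReal.rpow_lt_rpow ?_ (one_div_pos.2 hr)
  have hfin : ∫⁻ u in Ioc a x, ‖q u‖ₑ ^ p.toReal < ∞ :=
    lintegral_rpow_enorm_lt_top_of_eLpNorm_lt_top hp0 hp ((hq.mono_measure (hsub le_rfl hx.2)).2)
  have hpos : 0 < ∫⁻ u in Ioc x y, ‖q u‖ₑ ^ p.toReal := by
    refine pos_iff_ne_zero.2 fun hzero => ?_
    have hq0' : ∀ᵐ u ∂volume.restrict (Ioc x y), q u ≠ 0 := ae_mono (hsub hx.1 hy.2) hq0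
    have hqz : ∀ᵐ u ∂volume.restrict (Ioc x y), q u = 0 := by
      have hmeas := ((hq.mono_measure (hsub hx.1 hy.2)).aestronglyMeasurable.enorm.pow_const
        p.toReal)
      filter_upwards [(lintegral_eq_zero_iff' hmeas).1 hzero] with u hu
      simpa [hr, hr.ne'] using hu
    have hnull : ∀ᵐ u ∂volume.restrict (Ioc x y), False := by
      filter_upwards [hq0', hqz] with u hne heq using hne heq
    simp only [ae_iff, not_false_eq_true, ofPred_true, Measure.restrict_apply_univ,
      Real.volume_Ioc, ENNReal.ofReal_eq_zero] at hnull
    linarith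
  rw [← Ioc_union_Ioc_eq_Ioc hx.1 hxy.le,
    lintegral_union measurableSet_Ioc (Ioc_disjoint_Ioc_of_le le_rfl)]
  exact ENNReal.lt_add_right hfin.ne hpos.ne'

section L2dist

variable {F : Type*} [NormedAddCommGroup F] {f g : ℝ → F}

theorem L2dist_eq_lpNorm (hfg : AEStronglyMeasurable (f - g) μ01) :
    L2dist f g = lpNorm (f - g) 2 μ01 := by
  rw [L2dist, lpNorm_eq_integral_norm_rpow_toReal two_ne_zero ENNReal.ofNat_ne_top hfg,
    Real.sqrt_eq_rpow]
  simp only [ENNReal.toReal_ofNat, Real.rpow_two, one_div, Pi.sub_apply]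
  rfl

theorem eLpNorm_sub_eq_ofReal_L2dist (hf : MemLp f 2 μ01) (hg : MemLp g 2 μ01) :
    eLpNorm (f - g) 2 μ01 = ENNReal.ofReal (L2dist f g) := by
  rw [L2dist_eq_lpNorm (hf.sub hg).aestronglyMeasurable, ofReal_lpNorm (hf.sub hg)]

end L2dist

theorem μ01_eq_restrict_Ioc : μ01 = volume.restrict (Ioc 0 1) :=
  Measure.restrict_congr_set Ioc_ae_eq_Icc |>.symm

namespace GammaTilde

variable (γ : GammaTilde)

/-- `toFun` is unconstrained off `I`; this continuous monotone function on `ℝ` agrees with it on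
`I` and can be used with `Measure.map`. -/
def extend (x : ℝ) : ℝ := ∫ u in 0..x, (Icc 0 1).indicator γ.deriv' u

theorem integrable_indicator_deriv : Integrable ((Icc 0 1).indicator γ.deriv') :=
  (integrable_indicator_iff measurableSet_Icc).2 γ.integrableOn

theorem continuous_extend : Continuous γ.extend :=
  γ.integrable_indicator_deriv.continuous_primitive 0

theorem monotone_extend : Monotone γ.extend := by
  intro x y hxy
  have hnonneg : 0 ≤ᵐ[volume] (Icc 0 1).indicator γ.deriv' := by
    have h := γ.nonneg
    rw [μ01, ae_restrict_iff' measurableSet_Icc] at h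
    filter_upwards [h] with u hu
    by_cases hmem : u ∈ Icc (0:ℝ) 1
    · simp [indicator_of_mem hmem, hu hmem]
    · simp [indicator_of_notMem hmem]
  rw [extend, extend, ← intervalIntegral.integral_add_adjacent_intervals (b := x) (c := y)
    γ.integrable_indicator_deriv.intervalIntegrable γ.integrable_indicator_deriv.intervalIntegrable]
  exact le_add_of_nonneg_right (intervalIntegral.integral_nonneg_of_ae hxy hnonneg)

theorem extend_eq {t : ℝ} (ht : t ∈ Icc (0:ℝ) 1) : γ.extend t = γ.toFun t := by
  rw [γ.eq_integral t ht, extend]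
  refine intervalIntegral.integral_congr fun u hu => ?_
  rw [uIcc_of_le ht.1] at hu
  exact indicator_of_mem (Icc_subset_Icc le_rfl ht.2 hu) _

theorem extend_zero : γ.extend 0 = 0 := by
  rw [γ.extend_eq (left_mem_Icc.2 zero_le_one), γ.map_zero]

theorem extend_one : γ.extend 1 = 1 := by
  rw [γ.extend_eq (right_mem_Icc.2 zero_le_one), γ.map_one]

theorem toFun_mem_Icc {t : ℝ} (ht : t ∈ Icc (0:ℝ) 1) : γ.toFun t ∈ Icc (0:ℝ) 1 := by
  rw [← γ.extend_eq ht, ← γ.extend_zero, ← γ.extend_one]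
  exact ⟨γ.monotone_extend ht.1, γ.monotone_extend ht.2⟩

def densityMeasure (t : ℝ) : Measure ℝ :=
  (volume.restrict (Ioc 0 t)).withDensity fun s => ENNReal.ofReal (γ.deriv' s)

theorem densityMeasure_Ioc {c t : ℝ} (hc : c ∈ Icc 0 t) (ht : t ≤ 1) :
    γ.densityMeasure t (Ioc 0 c) = ENNReal.ofReal (γ.extend c) := by
  have hsub : Ioc (0:ℝ) c ⊆ Icc 0 1 := fun s hs => ⟨hs.1.le, hs.2.trans (hc.2.trans ht)⟩
  rw [densityMeasure, withDensity_apply _ measurableSet_Ioc,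
    Measure.restrict_restrict measurableSet_Ioc, inter_eq_left.2 (Ioc_subset_Ioc_right hc.2),
    ← ofReal_integral_eq_lintegral_ofReal (γ.integrableOn.mono_set hsub)
      (ae_mono (Measure.restrict_mono hsub le_rfl) γ.nonneg),
    γ.extend_eq ⟨hc.1, hc.2.trans ht⟩, γ.eq_integral c ⟨hc.1, hc.2.trans ht⟩,
    intervalIntegral.integral_of_le hc.1]

theorem map_extend_densityMeasure {t : ℝ} (ht : t ∈ Icc (0:ℝ) 1) :
    (γ.densityMeasure t).map γ.extend = volume.restrict (Ioc 0 (γ.toFun t)) := by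
  rw [← γ.extend_eq ht, ← γ.extend_zero]
  refine γ.monotone_extend.map_eq_volume_restrict_Ioc γ.continuous_extend.continuousOn ht.1
    ((withDensity_absolutelyContinuous _ _).ae_le (ae_restrict_mem measurableSet_Ioc))
    fun c hc => ?_
  rw [γ.densityMeasure_Ioc hc ht.2, γ.extend_zero, sub_zero]

theorem lintegral_comp_mul_deriv {t : ℝ} (ht : t ∈ Icc (0:ℝ) 1) {g : ℝ → ℝ≥0∞}
    (hg : AEMeasurable g (volume.restrict (Ioc 0 (γ.toFun t)))) :
    ∫⁻ s in Ioc 0 t, ENNReal.ofReal (γ.deriv' s) * g (γ.toFun s) =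
      ∫⁻ u in Ioc 0 (γ.toFun t), g u := by
  have hsub : Ioc (0:ℝ) t ⊆ Icc 0 1 := fun s hs => ⟨hs.1.le, hs.2.trans ht.2⟩
  have hdens : AEMeasurable (fun s => ENNReal.ofReal (γ.deriv' s)) (volume.restrict (Ioc 0 t)) :=
    (γ.integrableOn.mono_set hsub).aemeasurable.ennreal_ofReal
  rw [← γ.map_extend_densityMeasure ht] at hg ⊢
  rw [lintegral_map' hg γ.continuous_extend.aemeasurable, densityMeasure,
    lintegral_withDensity_eq_lintegral_mul_non_measurable₀ _ hdens
      (Eventually.of_forall fun _ => ENNReal.ofReal_lt_top)]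
  refine setLIntegral_congr_fun measurableSet_Ioc fun s hs => ?_
  simp only [Pi.mul_apply, γ.extend_eq (hsub hs)]

theorem aestronglyMeasurable_act {q : ℝ → E} (hq : AEStronglyMeasurable q μ01) :
    AEStronglyMeasurable (act q γ) μ01 := by
  rw [μ01_eq_restrict_Ioc] at hq ⊢
  have hdens : AEMeasurable (fun s => ENNReal.ofReal (γ.deriv' s)) (volume.restrict (Ioc 0 1)) :=
    (γ.integrableOn.mono_set Ioc_subset_Icc_self).aemeasurable.ennreal_ofReal
  -- `γ` pushes `γ' ds` forward to Lebesgue measure, so `q ∘ γ` agrees with a measurable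
  -- function wherever `γ' ≠ 0`
  have hcomp : ∀ᵐ s ∂volume.restrict (Ioc 0 1), ENNReal.ofReal (γ.deriv' s) ≠ 0 →
      q (γ.extend s) = hq.mk q (γ.extend s) := by
    rw [← ae_withDensity_iff' hdens]
    refine ae_of_ae_map (μ := γ.densityMeasure 1) (p := fun u => q u = hq.mk q u)
      γ.continuous_extend.aemeasurable ?_
    rw [γ.map_extend_densityMeasure (right_mem_Icc.2 zero_le_one), γ.map_one]
    exact hq.ae_eq_mk
  have hmk : AEStronglyMeasurable (fun s => √(γ.deriv' s) • hq.mk q (γ.extend s))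
      (volume.restrict (Ioc 0 1)) :=
    (Real.continuous_sqrt.comp_aestronglyMeasurable
      (γ.integrableOn.mono_set Ioc_subset_Icc_self).aestronglyMeasurable).smul
      (hq.stronglyMeasurable_mk.comp_measurable γ.continuous_extend.measurable).aestronglyMeasurable
  refine hmk.congr ?_
  filter_upwards [hcomp, ae_restrict_mem measurableSet_Ioc] with s hs hmem
  simp only [act, ← γ.extend_eq (Ioc_subset_Icc_self hmem)]
  by_cases hd : ENNReal.ofReal (γ.deriv' s) = 0
  · simp [Real.sqrt_eq_zero'.2 (ENNReal.ofReal_eq_zero.1 hd)]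
  · rw [hs hd]

theorem lintegral_enorm_act_sq {q : ℝ → E} (hq : AEStronglyMeasurable q μ01) {t : ℝ}
    (ht : t ∈ Icc (0:ℝ) 1) :
    ∫⁻ s in Ioc 0 t, ‖act q γ s‖ₑ ^ 2 = ∫⁻ u in Ioc 0 (γ.toFun t), ‖q u‖ₑ ^ 2 := by
  have hsub : ∀ x ∈ Icc (0:ℝ) 1, volume.restrict (Ioc 0 x) ≤ μ01 :=
    fun _ hx => Measure.restrict_mono (Ioc_subset_Icc_self.trans (Icc_subset_Icc_right hx.2)) le_rfl
  rw [← γ.lintegral_comp_mul_deriv ht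
    ((hq.mono_measure (hsub _ (γ.toFun_mem_Icc ht))).enorm.pow_const 2)]
  refine lintegral_congr_ae ?_
  filter_upwards [ae_mono (hsub t ht) γ.nonneg] with s hs
  rw [act, enorm_smul, mul_pow, Real.enorm_of_nonneg (Real.sqrt_nonneg _),
    ← ENNReal.ofReal_pow (Real.sqrt_nonneg _), Real.sq_sqrt hs]

theorem eLpNorm_act_restrict_Ioc {q : ℝ → E} (hq : AEStronglyMeasurable q μ01) {t : ℝ}
    (ht : t ∈ Icc (0:ℝ) 1) :
    eLpNorm (act q γ) 2 (volume.restrict (Ioc 0 t)) =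
      eLpNorm q 2 (volume.restrict (Ioc 0 (γ.toFun t))) := by
  simp only [eLpNorm_eq_lintegral_rpow_enorm_toReal two_ne_zero ENNReal.ofNat_ne_top,
    ENNReal.toReal_ofNat, ENNReal.rpow_two, γ.lintegral_enorm_act_sq hq ht]

theorem memLp_act {q : ℝ → E} (hq : MemLp q 2 μ01) : MemLp (act q γ) 2 μ01 := by
  refine ⟨γ.aestronglyMeasurable_act hq.1, ?_⟩
  rw [μ01_eq_restrict_Ioc, γ.eLpNorm_act_restrict_Ioc hq.1 (right_mem_Icc.2 zero_le_one),
    γ.map_one, ← μ01_eq_restrict_Ioc]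
  exact hq.2

end GammaTilde

/-- if `q ∈ L²(I,ℝ)` vanishes only on a null set, `(τ_k) ⊆ Γ̃`,
`τ ∈ Γ̃`, and `q*τ_k → q*τ` in `L²`, then `τ_k(t) → τ(t)` for every `t ∈ I`. -/
theorem pointwise_convergence_of_reparametrizations (q : ℝ → ℝ)
    (hq : MemLp q 2 μ01)
    (h0 : volume {t ∈ Set.Icc (0:ℝ) 1 | q t = 0} = 0)
    (τk : ℕ → GammaTilde) (τ : GammaTilde)
    (hconv : Tendsto (fun k => L2dist (act q (τk k)) (act q τ)) atTop (nhds 0)) :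
    ∀ t ∈ Set.Icc (0:ℝ) 1,
      Tendsto (fun k => (τk k).toFun t) atTop (nhds (τ.toFun t)) := by
  intro t ht
  have hrestrict : volume.restrict (Ioc 0 t) ≤ μ01 :=
    Measure.restrict_mono (Ioc_subset_Icc_self.trans (Icc_subset_Icc_right ht.2)) le_rfl
  have hdist : Tendsto (fun k => eLpNorm (act q (τk k) - act q τ) 2 μ01) atTop (nhds 0) := by
    simp_rw [eLpNorm_sub_eq_ofReal_L2dist ((τk _).memLp_act hq) (τ.memLp_act hq)]
    simpa using ENNReal.tendsto_ofReal hconv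
  have hnorm := tendsto_eLpNorm_of_tendsto_eLpNorm_sub
    (fun k => ((τk k).memLp_act hq).mono_measure hrestrict)
    ((τ.memLp_act hq).mono_measure hrestrict)
    (tendsto_of_tendsto_of_tendsto_of_le_of_le tendsto_const_nhds hdist (fun _ => zero_le)
      fun _ => eLpNorm_mono_measure _ hrestrict)
  simp only [GammaTilde.eLpNorm_act_restrict_Ioc _ hq.1 ht] at hnorm
  have hq0 : ∀ᵐ u ∂μ01, q u ≠ 0 := by
    rw [μ01, ae_restrict_iff' measurableSet_Icc, ae_iff]
    simpa [and_assoc] using h0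
  rw [μ01_eq_restrict_Ioc] at hq hq0
  exact (strictMonoOn_eLpNorm_restrict_Ioc two_ne_zero ENNReal.ofNat_ne_top hq hq0
    ).tendsto_of_tendsto_comp ordConnected_Icc (fun k => (τk k).toFun_mem_Icc ht)
    (τ.toFun_mem_Icc ht) hnorm

end
end
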